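/- arXiv:2003.01326 — 9 statements merged into one kernel-verified Lean document; each statement's English description precedes it below -/
import Mathlib

section
/- Let Y be a proper metric space, let k ≥ 1, and equip ℝ^k × Y with the ℓ²-product metric (ℝ^k carrying the standard Euclidean metric). Let N be a closed subset of ℝ^k × Y which is geodesic in ℝ^k × Y and which contains a slice ℝ^k × {y} for some y ∈ Y. Then N equals ℝ^k × Z as a subset of ℝ^k × Y, where Z = { y' ∈ Y : (0, y') ∈ N }; in particular, with the restricted metric, N is the ℓ²-metric product of ℝ^k and Z. -/
/- Fix `(u, z) ∈ N`, a unit vector `e` and `s > 0`. For large `t`, follow a geodesic of `N`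
from `(u, z)` towards the slice point `(u + t • e, y)` for a length `s`. Expanding the
ℓ²-distances shows that the point `m` reached satisfies `d((u + s • e, z), m)² ≤ 2 s² d(z, y) / t`,
so letting `t → ∞` and using that `N` is closed gives `(u + s • e, z) ∈ N`. -/

/-- A minimizing geodesic from `p` to `q` in a metric space: an isometric embedding of
`[0, dist p q]` sending `0` to `p` and `dist p q` to `q`. -/
def IsMinGeodesic {X : Type*} [MetricSpace X] (c : ℝ → X) (p q : X) : Prop :=
  c 0 = p ∧ c (dist p q) = q ∧
    ∀ s ∈ Set.Icc (0 : ℝ) (dist p q), ∀ t ∈ Set.Icc (0 : ℝ) (dist p q),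
      dist (c s) (c t) = |s - t|

/-- A subset `S` of a metric space `X` is geodesic in `X` if any two points of `S` are
joined by a minimal geodesic of `X` contained in `S`. -/
def IsGeodesicIn {X : Type*} [MetricSpace X] (S : Set X) : Prop :=
  ∀ p ∈ S, ∀ q ∈ S, ∃ c : ℝ → X, IsMinGeodesic c p q ∧
    ∀ t ∈ Set.Icc (0 : ℝ) (dist p q), c t ∈ S

open Filter Topology WithLp
open scoped RealInnerProductSpace

lemma WithLp.prod_dist_sq {α β : Type*} [PseudoMetricSpace α] [PseudoMetricSpace β]
    (x y : WithLp 2 (α × β)) :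
    dist x y ^ 2 = dist x.fst y.fst ^ 2 + dist x.snd y.snd ^ 2 := by
  rw [prod_dist_eq_add (by norm_num), ← Real.rpow_natCast _ 2, ← Real.rpow_mul (by positivity)]
  norm_num

lemma IsGeodesicIn.exists_mem_dist_eq {X : Type*} [MetricSpace X] {S : Set X}
    (hS : IsGeodesicIn S) {p q : X} (hp : p ∈ S) (hq : q ∈ S) {s : ℝ}
    (hs : s ∈ Set.Icc 0 (dist p q)) : ∃ m ∈ S, dist p m = s ∧ dist m q = dist p q - s := by
  obtain ⟨c, ⟨hc0, hcq, hiso⟩, hcS⟩ := hS p hp q hq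
  refine ⟨c s, hcS s hs, ?_, ?_⟩
  · rw [← hc0, hiso 0 ⟨le_rfl, dist_nonneg⟩ s hs, zero_sub, abs_neg, abs_of_nonneg hs.1]
  · rw [← hcq, hiso s hs _ ⟨dist_nonneg, le_rfl⟩, hcq, abs_sub_comm,
      abs_of_nonneg (sub_nonneg.2 hs.2)]

section InnerProductSpace

variable {E : Type*} [NormedAddCommGroup E] [InnerProductSpace ℝ E]

lemma le_dist_toLp_add_smul {Y : Type*} [PseudoMetricSpace Y] {e : E} (he : ‖e‖ = 1)
    (u : E) (z y : Y) {t : ℝ} (ht : 0 ≤ t) :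
    t ≤ dist (toLp 2 (u, z)) (toLp 2 (u + t • e, y)) := by
  simpa [norm_smul, he, abs_of_nonneg ht] using
    dist_fst_le (toLp 2 (u, z)) (toLp 2 (u + t • e, y))

lemma dist_add_smul_sq_le_of_dist_eq {Y : Type*} [PseudoMetricSpace Y] {u e : E}
    (he : ‖e‖ = 1) (z y : Y) {s t : ℝ} (ht : 0 < t) {m : WithLp 2 (E × Y)}
    (hm : dist (toLp 2 (u, z)) m = s)
    (hmq : dist m (toLp 2 (u + t • e, y)) = dist (toLp 2 (u, z)) (toLp 2 (u + t • e, y)) - s) :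
    dist (toLp 2 (u + s • e, z)) m ^ 2 ≤ 2 * s ^ 2 * dist z y / t := by
  set D := dist (toLp 2 (u, z)) (toLp 2 (u + t • e, y))
  set x := m.fst - u
  set I := ⟪x, e⟫
  set B := dist m.snd z
  set C := dist m.snd y
  have hs : 0 ≤ s := hm ▸ dist_nonneg
  have hD : D ^ 2 = t ^ 2 + dist z y ^ 2 := by
    simp [D, prod_dist_sq, norm_smul, he, abs_of_pos ht]
  have htD : t ≤ D := le_dist_toLp_add_smul he u z y ht.le
  have hm_sq : ‖x‖ ^ 2 + B ^ 2 = s ^ 2 := by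
    rw [← hm, prod_dist_sq]
    simp [x, B, dist_eq_norm, norm_sub_rev, dist_comm]
  have hmq_sq : ‖x‖ ^ 2 - 2 * t * I + t ^ 2 + C ^ 2 = (D - s) ^ 2 := by
    rw [← hmq, prod_dist_sq]
    have hfst : m.fst - (u + t • e) = x - t • e := by simp only [x]; abel
    simp only [toLp_fst, toLp_snd, dist_eq_norm, hfst, norm_sub_sq_real, inner_smul_right,
      norm_smul, he]
    simp [I, C, abs_of_pos ht]
    ring
  have hBs : B ≤ s := by nlinarith [norm_nonneg x, dist_nonneg (x := m.snd) (y := z)]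
  have hBC : |dist z y - B| ≤ C := by
    simpa [B, C, dist_comm] using abs_dist_sub_le y m.snd z
  have hC : (dist z y - B) ^ 2 ≤ C ^ 2 := sq_le_sq' (abs_le.1 hBC).1 (abs_le.1 hBC).2
  have hI_eq : 2 * t * I = C ^ 2 - B ^ 2 - dist z y ^ 2 + 2 * D * s := by
    linear_combination hm_sq - hmq_sq - hD
  have hI : t * (s - I) ≤ s * dist z y := by
    nlinarith [mul_le_mul_of_nonneg_right htD hs,
      mul_le_mul_of_nonneg_left hBs (dist_nonneg (x := z) (y := y))]
  have hgoal : dist (toLp 2 (u + s • e, z)) m ^ 2 = 2 * s * (s - I) := by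
    rw [prod_dist_sq]
    have hfst : u + s • e - m.fst = s • e - x := by simp only [x]; abel
    simp only [toLp_fst, toLp_snd, dist_eq_norm, hfst, norm_sub_sq_real, inner_smul_left,
      norm_smul, he]
    simp [I, real_inner_comm, abs_of_nonneg hs, dist_comm z]
    linarith
  rw [hgoal, le_div_iff₀ ht]
  nlinarith

theorem IsGeodesicIn.toLp_mem_of_toLp_mem {Y : Type*} [MetricSpace Y]
    {N : Set (WithLp 2 (E × Y))} (hgeo : IsGeodesicIn N) (hclosed : IsClosed N) {y : Y}
    (hslice : ∀ u : E, toLp 2 (u, y) ∈ N) {u : E} {z : Y} (hz : toLp 2 (u, z) ∈ N) (v : E) :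
    toLp 2 (v, z) ∈ N := by
  rcases eq_or_ne v u with rfl | hvu
  · exact hz
  set s := ‖v - u‖
  set e := s⁻¹ • (v - u)
  have hs : 0 < s := norm_pos_iff.2 (sub_ne_zero.2 hvu)
  have he : ‖e‖ = 1 := norm_smul_inv_norm (sub_ne_zero.2 hvu)
  have hv : v = u + s • e := by simp [e, smul_inv_smul₀ hs.ne']
  have hnear : ∀ t, s ≤ t → ∃ m ∈ N, dist (toLp 2 (v, z)) m ^ 2 ≤ 2 * s ^ 2 * dist z y / t := by
    intro t hst
    have ht : 0 < t := hs.trans_le hst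
    obtain ⟨m, hmN, hm, hmq⟩ := hgeo.exists_mem_dist_eq hz (hslice (u + t • e))
      ⟨hs.le, hst.trans (le_dist_toLp_add_smul he u z y ht.le)⟩
    exact ⟨m, hmN, hv ▸ dist_add_smul_sq_le_of_dist_eq he z y ht hm hmq⟩
  rw [← hclosed.closure_eq, Metric.mem_closure_iff]
  intro ε hε
  have hlim : Tendsto (fun t => 2 * s ^ 2 * dist z y / t) atTop (𝓝 0) :=
    tendsto_const_nhds.div_atTop tendsto_id
  obtain ⟨t, hst, ht⟩ :=
    ((eventually_ge_atTop s).and (hlim.eventually (gt_mem_nhds (pow_pos hε 2)))).exists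
  obtain ⟨m, hmN, hm⟩ := hnear t hst
  exact ⟨m, hmN, lt_of_pow_lt_pow_left₀ 2 hε.le (hm.trans_lt ht)⟩

end InnerProductSpace

theorem stmt_0_general (k : ℕ) (Y : Type*) [MetricSpace Y]
    (N : Set (WithLp 2 (EuclideanSpace ℝ (Fin k) × Y)))
    (hclosed : IsClosed N) (hgeo : IsGeodesicIn N) (y : Y)
    (hslice : ∀ u : EuclideanSpace ℝ (Fin k),
      (WithLp.equiv 2 (EuclideanSpace ℝ (Fin k) × Y)).symm (u, y) ∈ N) :
    N = {p : WithLp 2 (EuclideanSpace ℝ (Fin k) × Y) |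
      ((WithLp.equiv 2 (EuclideanSpace ℝ (Fin k) × Y)) p).2 ∈
        {y' : Y | (WithLp.equiv 2 (EuclideanSpace ℝ (Fin k) × Y)).symm (0, y') ∈ N}} := by
  ext ⟨⟨u, z⟩⟩
  exact ⟨fun h => hgeo.toLp_mem_of_toLp_mem hclosed hslice h 0,
    fun h => hgeo.toLp_mem_of_toLp_mem hclosed hslice h u⟩

/-- If `N` is a closed geodesic subset of the ℓ²-product `ℝᵏ × Y` (with `Y` proper)
containing a slice `ℝᵏ × {y}`, then `N = ℝᵏ × Z` where `Z = {y' | (0, y') ∈ N}`. -/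
theorem stmt_0 (k : ℕ) (hk : 1 ≤ k) (Y : Type*) [MetricSpace Y] [ProperSpace Y]
    (N : Set (WithLp 2 (EuclideanSpace ℝ (Fin k) × Y)))
    (hclosed : IsClosed N) (hgeo : IsGeodesicIn N) (y : Y)
    (hslice : ∀ u : EuclideanSpace ℝ (Fin k),
      (WithLp.equiv 2 (EuclideanSpace ℝ (Fin k) × Y)).symm (u, y) ∈ N) :
    N = {p : WithLp 2 (EuclideanSpace ℝ (Fin k) × Y) |
      ((WithLp.equiv 2 (EuclideanSpace ℝ (Fin k) × Y)) p).2 ∈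
        {y' : Y | (WithLp.equiv 2 (EuclideanSpace ℝ (Fin k) × Y)).symm (0, y') ∈ N}} :=
  stmt_0_general k Y N hclosed hgeo y hslice
end

section
/- Let Y be a proper metric space, let G be a group acting on Y by isometries, and let y ∈ Y. Suppose the orbit G·y is a closed subset of Y, is geodesic in Y, and is not compact. Then Y contains a line through y whose image is contained in G·y; that is, there is an isometric embedding ℓ : ℝ → Y with ℓ(0) = y and ℓ(ℝ) ⊆ G·y. -/
/-! Since the orbit is closed and non-compact in a proper space, it is unbounded, so it contains
arbitrarily long geodesic segments; translating the midpoint of such a segment back to `y` by a group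
element gives, for every `n`, an isometric copy of `[-n, n]` in the orbit centred at `y`. Extended
by clamping, these are 1-Lipschitz maps `ℝ → Y` pinned at `y`, hence lie in the compact product
`∏ₜ closedBall y |t|`, and any pointwise cluster point of them is the required line. -/

open Set Filter Metric MulAction

section

variable {Y : Type*} [MetricSpace Y]

theorem exists_isometry_of_eventually_dist_eq [ProperSpace Y] {ι : Type*} {l : Filter ι} [l.NeBot]
    {O : Set Y} (hO : IsClosed O) {y : Y} (f : ι → ℝ → Y) (hlip : ∀ i, LipschitzWith 1 (f i))
    (hf0 : ∀ i, f i 0 = y) (hfO : ∀ i, range (f i) ⊆ O)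
    (hdist : ∀ s t, ∀ᶠ i in l, dist (f i s) (f i t) = dist s t) :
    ∃ ℓ : ℝ → Y, Isometry ℓ ∧ ℓ 0 = y ∧ range ℓ ⊆ O := by
  -- Tychonoff: 1-Lipschitz maps pinned at `y` send `t` into the compact ball of radius `|t|`.
  have hK : IsCompact (univ.pi fun t : ℝ => closedBall y |t|) :=
    isCompact_univ_pi fun t => isCompact_closedBall y _
  have hfK : ∀ i, f i ∈ univ.pi fun t : ℝ => closedBall y |t| := fun i t _ => by
    simpa [hf0, Real.dist_eq] using (hlip i).dist_le_mul t 0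
  obtain ⟨ℓ, -, hℓ⟩ := hK.exists_mapClusterPt (f := l) (tendsto_principal.2 (.of_forall hfK))
  refine ⟨ℓ, .of_dist_eq fun s t => ?_, ?_, range_subset_iff.2 fun t => ?_⟩
  · have hC : IsClosed {g : ℝ → Y | dist (g s) (g t) = dist s t} :=
      isClosed_eq (by fun_prop) continuous_const
    exact hC.mem_of_mapClusterPt hℓ (hdist s t)
  · exact (isClosed_eq (continuous_apply 0) continuous_const).mem_of_mapClusterPt hℓ
      (.of_forall hf0)
  · exact (hO.preimage (continuous_apply t)).mem_of_mapClusterPt hℓ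
      (.of_forall fun i => hfO i (mem_range_self t))

theorem exists_lipschitzWith_one_extension_Icc {a b : ℝ} (hab : a ≤ b) {γ : ℝ → Y}
    (hγ : Isometry ((Icc a b).domRestrict γ)) :
    ∃ f : ℝ → Y, LipschitzWith 1 f ∧ EqOn f γ (Icc a b) ∧ range f ⊆ γ '' Icc a b := by
  refine ⟨IccExtend hab ((Icc a b).domRestrict γ), ?_, fun t ht => IccExtend_of_mem _ _ ht, ?_⟩
  · exact mul_one (1 : NNReal) ▸ hγ.lipschitz.comp (LipschitzWith.projIcc hab)
  · rw [IccExtend_range]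
    rintro _ ⟨t, rfl⟩
    exact mem_image_of_mem γ t.2

theorem exists_isometry_domRestrict_Icc_of_isGeodesicIn_orbit {G : Type*} [Group G] [MulAction G Y]
    (hiso : ∀ g : G, Isometry (fun z : Y => g • z)) {y : Y} (hgeo : IsGeodesicIn (orbit G y))
    (hunb : ¬ Bornology.IsBounded (orbit G y)) {r : ℝ} (hr : 0 ≤ r) :
    ∃ γ : ℝ → Y, Isometry ((Icc (-r) r).domRestrict γ) ∧ γ 0 = y ∧
      MapsTo γ (Icc (-r) r) (orbit G y) := by
  obtain ⟨z, hz, hrz⟩ : ∃ z ∈ orbit G y, 2 * r ≤ dist y z := by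
    by_contra! h
    exact hunb ((isBounded_iff_subset_closedBall y).2
      ⟨2 * r, fun z hz => by simpa [dist_comm] using (h z hz).le⟩)
  obtain ⟨c, ⟨-, -, hc⟩, hcO⟩ := hgeo y (mem_orbit_self y) z hz
  have hshift : ∀ t ∈ Icc (-r) r, t + r ∈ Icc 0 (dist y z) := fun t ht =>
    ⟨by linarith [ht.1], by linarith [ht.2]⟩
  -- Translate the midpoint `c r` of a long geodesic back to `y`.
  obtain ⟨g, hg⟩ := hcO r ⟨hr, by linarith⟩
  refine ⟨fun t => g⁻¹ • c (t + r), .of_dist_eq fun s t => ?_, ?_, fun t ht => ?_⟩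
  · simp only [domRestrict_apply, (hiso g⁻¹).dist_eq, hc _ (hshift s s.2) _ (hshift t t.2),
      Subtype.dist_eq, Real.dist_eq, add_sub_add_right_eq_sub]
  · simp [← hg]
  · exact mem_orbit_of_mem_orbit g⁻¹ (hcO _ (hshift t ht))

end

/-- If a group `G` acts by isometries on a proper metric space `Y` and the orbit `G · y` is
closed, geodesic in `Y` and non-compact, then there is a line through `y` contained in the
orbit. -/
theorem stmt_1 {Y : Type*} [MetricSpace Y] [ProperSpace Y]
    {G : Type*} [Group G] [MulAction G Y]
    (hiso : ∀ g : G, Isometry (fun z : Y => g • z)) (y : Y)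
    (hclosed : IsClosed (MulAction.orbit G y))
    (hgeo : IsGeodesicIn (MulAction.orbit G y))
    (hnoncpt : ¬ IsCompact (MulAction.orbit G y)) :
    ∃ ℓ : ℝ → Y, Isometry ℓ ∧ ℓ 0 = y ∧ Set.range ℓ ⊆ MulAction.orbit G y := by
  have hunb : ¬ Bornology.IsBounded (orbit G y) := fun hb =>
    hnoncpt (isCompact_of_isClosed_isBounded hclosed hb)
  have hseg (n : ℕ) : ∃ f : ℝ → Y, LipschitzWith 1 f ∧ f 0 = y ∧ range f ⊆ orbit G y ∧
      ∀ s ∈ Icc (-n : ℝ) n, ∀ t ∈ Icc (-n : ℝ) n, dist (f s) (f t) = dist s t := by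
    have hn : (-n : ℝ) ≤ n := neg_le_self n.cast_nonneg
    obtain ⟨γ, hγ, hγ0, hγO⟩ :=
      exists_isometry_domRestrict_Icc_of_isGeodesicIn_orbit hiso hgeo hunb n.cast_nonneg
    obtain ⟨f, hlip, hfγ, hfO⟩ := exists_lipschitzWith_one_extension_Icc hn hγ
    have h0 : (0 : ℝ) ∈ Icc (-n : ℝ) n := ⟨by linarith, n.cast_nonneg⟩
    refine ⟨f, hlip, (hfγ h0).trans hγ0, hfO.trans (image_subset_iff.2 hγO), fun s hs t ht => ?_⟩
    rw [hfγ hs, hfγ ht]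
    exact hγ.dist_eq ⟨s, hs⟩ ⟨t, ht⟩
  choose f hlip hf0 hfO hfiso using hseg
  refine exists_isometry_of_eventually_dist_eq (l := atTop) hclosed f hlip hf0 hfO fun s t => ?_
  filter_upwards [tendsto_natCast_atTop_atTop.eventually_ge_atTop (max |s| |t|)] with n hn
  exact hfiso n s (abs_le.1 (le_of_max_le_left hn)) t (abs_le.1 (le_of_max_le_right hn))
end

section
/- Let G be a nilpotent subgroup of the isometry group Isom(ℝ^l) of Euclidean space ℝ^l, and let (A, x) and (B, y) be two elements of G. Then (A, x) and (B, y) commute in Isom(ℝ^l) if and only if A and B commute in O(l). -/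
/-!
If `A` and `B` commute, the commutator of `g = (A, x)` and `h = (B, y)` is the translation by
`t = (A y + x) - (B x + y)`. Commuting a translation by `s` with `(P, a)` gives the translation by
`s - P s`, so in a nilpotent group `(1 - A)ⁿ t = 0` for large `n`. For an orthogonal `A` the range
of `1 - A` is orthogonal to its kernel, hence `A t = t`, and likewise `B t = t`. Then `t` is
orthogonal to `(A - 1) y - (B - 1) x = t`, so `t = 0` and `g` and `h` commute.
-/

open scoped InnerProductSpace commutatorElement

theorem Subgroup.exists_iterate_commutatorElement_eq_one {G : Type*} [Group G] {S : Subgroup G}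
    (hS : Group.IsNilpotent S) {c p : G} (hc : c ∈ S) (hp : p ∈ S) :
    ∃ n, (fun c => ⁅c, p⁆)^[n] c = 1 := by
  have hmem : ∀ n, (fun c => ⁅c, p⁆)^[n] c ∈ S.lowerCentralSeries n := by
    intro n
    induction n with
    | zero => exact hc
    | succ n ih =>
      rw [Function.iterate_succ_apply']
      exact commutator_mem_commutator ih hp
  obtain ⟨n, hn⟩ := (isNilpotent_iff_lowerCentralSeries S).mp hS
  exact ⟨n, Subgroup.mem_bot.mp (hn ▸ hmem n)⟩

namespace LinearIsometry

variable {𝕜 E : Type*} [RCLike 𝕜] [NormedAddCommGroup E] [InnerProductSpace 𝕜 E]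

theorem inner_apply_sub_self_eq_zero_of_apply_eq (A : E →ₗᵢ[𝕜] E) {t : E} (ht : A t = t)
    (y : E) : ⟪A y - y, t⟫_𝕜 = 0 := by
  rw [inner_sub_left, ← A.inner_map_map y t, ht, sub_self]

theorem apply_eq_of_iterate_sub_eq_zero (A : E →ₗᵢ[𝕜] E) (n : ℕ) {t : E}
    (ht : (fun u => u - A u)^[n] t = 0) : A t = t := by
  induction n generalizing t with
  | zero => simp_all
  | succ n ih =>
    rw [Function.iterate_succ_apply] at ht
    have hfix : A (t - A t) = t - A t := ih ht
    have horth := A.inner_apply_sub_self_eq_zero_of_apply_eq hfix t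
    rw [← neg_sub, inner_neg_left, neg_eq_zero, inner_self_eq_zero, sub_eq_zero] at horth
    exact horth.symm

end LinearIsometry

namespace IsometryEquiv

section Affine

variable {𝕜 E : Type*} [Semiring 𝕜] [NormedAddCommGroup E] [Module 𝕜 E]
  {g h : E ≃ᵢ E} {A B : E ≃ₗᵢ[𝕜] E} {x y : E}

theorem inv_apply_of_affine (hg : ∀ v, g v = A v + x) (v : E) : g⁻¹ v = A.symm (v - x) := by
  apply g.injective
  rw [g.apply_inv_self, hg, A.apply_symm_apply, sub_add_cancel]

theorem linear_comm_of_mul_comm (hg : ∀ v, g v = A v + x) (hh : ∀ v, h v = B v + y)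
    (hgh : g * h = h * g) (v : E) : A (B v) = B (A v) := by
  have happly : ∀ v, A (B v) + (A y + x) = B (A v) + (B x + y) := by
    intro v
    have := congrArg (· v) hgh
    simp only [mul_apply, hg, hh, map_add] at this
    rwa [← add_assoc, ← add_assoc]
  have hconst : A y + x = B x + y := by simpa using happly 0
  exact add_right_cancel (hconst ▸ happly v)

theorem commutatorElement_apply_of_commute (hg : ∀ v, g v = A v + x) (hh : ∀ v, h v = B v + y)
    (hAB : ∀ v, A (B v) = B (A v)) (v : E) : ⁅g, h⁆ v = v + (A y + x - (B x + y)) := by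
  have hBA : ∀ v, B (A.symm v) = A.symm (B v) := fun v => by
    rw [← A.symm_apply_apply (B (A.symm v)), hAB, A.apply_symm_apply]
  change g (h (g⁻¹ (h⁻¹ v))) = _
  rw [inv_apply_of_affine hh, inv_apply_of_affine hg, hh, hg]
  simp only [map_add, map_sub, hBA, LinearIsometryEquiv.apply_symm_apply]
  abel

theorem commutatorElement_apply_of_translation {k p : E ≃ᵢ E} {P : E ≃ₗᵢ[𝕜] E} {s a : E}
    (hk : ∀ v, k v = v + s) (hp : ∀ v, p v = P v + a) (v : E) :
    ⁅k, p⁆ v = v + (s - P s) := by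
  have hk_inv : ∀ v, k⁻¹ v = v - s := inv_apply_of_affine (A := LinearIsometryEquiv.refl 𝕜 E) hk
  change k (p (k⁻¹ (p⁻¹ v))) = _
  rw [inv_apply_of_affine hp, hk_inv, hp, hk, map_sub, P.apply_symm_apply]
  abel

theorem iterate_commutatorElement_apply_of_translation {k p : E ≃ᵢ E} {P : E ≃ₗᵢ[𝕜] E} {s a : E}
    (hk : ∀ v, k v = v + s) (hp : ∀ v, p v = P v + a) (n : ℕ) (v : E) :
    ((fun c => ⁅c, p⁆)^[n] k) v = v + (fun u => u - P u)^[n] s := by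
  induction n generalizing v with
  | zero => exact hk v
  | succ n ih =>
    rw [Function.iterate_succ_apply', Function.iterate_succ_apply',
      commutatorElement_apply_of_translation ih hp]

end Affine

variable {𝕜 E : Type*} [RCLike 𝕜] [NormedAddCommGroup E] [InnerProductSpace 𝕜 E]

theorem apply_eq_self_of_isNilpotent {G : Subgroup (E ≃ᵢ E)} (hG : Group.IsNilpotent G)
    {k p : E ≃ᵢ E} (hkG : k ∈ G) (hpG : p ∈ G) {P : E ≃ₗᵢ[𝕜] E} {s a : E}
    (hk : ∀ v, k v = v + s) (hp : ∀ v, p v = P v + a) : P s = s := by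
  obtain ⟨n, hn⟩ := G.exists_iterate_commutatorElement_eq_one hG hkG hpG
  have hzero := iterate_commutatorElement_apply_of_translation hk hp n 0
  rw [hn, coe_one, id, zero_add] at hzero
  exact P.toLinearIsometry.apply_eq_of_iterate_sub_eq_zero n hzero.symm

end IsometryEquiv

/-- If `G` is a nilpotent subgroup of `Isom(ℝˡ)` and `g = (A, x)`, `h = (B, y)` are two
elements of `G` (so `g v = A v + x` and `h v = B v + y` with `A, B ∈ O(l)`), then `g` and `h`
commute if and only if `A` and `B` commute. -/
theorem stmt_2 (l : ℕ)
    (G : Subgroup (EuclideanSpace ℝ (Fin l) ≃ᵢ EuclideanSpace ℝ (Fin l)))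
    (hG : Group.IsNilpotent G)
    (g h : EuclideanSpace ℝ (Fin l) ≃ᵢ EuclideanSpace ℝ (Fin l))
    (hg : g ∈ G) (hh : h ∈ G)
    (A B : EuclideanSpace ℝ (Fin l) ≃ₗᵢ[ℝ] EuclideanSpace ℝ (Fin l))
    (x y : EuclideanSpace ℝ (Fin l))
    (hgA : ∀ v, g v = A v + x) (hhB : ∀ v, h v = B v + y) :
    g * h = h * g ↔ ∀ v, A (B v) = B (A v) := by
  refine ⟨IsometryEquiv.linear_comm_of_mul_comm hgA hhB, fun hAB => ?_⟩
  set t := A y + x - (B x + y) with ht_def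
  have hcomm : ∀ v, ⁅g, h⁆ v = v + t :=
    IsometryEquiv.commutatorElement_apply_of_commute hgA hhB hAB
  have hcommG : ⁅g, h⁆ ∈ G := by
    rw [commutatorElement_def]
    exact G.mul_mem (G.mul_mem (G.mul_mem hg hh) (G.inv_mem hg)) (G.inv_mem hh)
  have hAt : A t = t := IsometryEquiv.apply_eq_self_of_isNilpotent hG hcommG hg hcomm hgA
  have hBt : B t = t := IsometryEquiv.apply_eq_self_of_isNilpotent hG hcommG hh hcomm hhB
  have ht : t = 0 := by
    have hAy : ⟪A y - y, t⟫_ℝ = 0 :=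
      A.toLinearIsometry.inner_apply_sub_self_eq_zero_of_apply_eq hAt y
    have hBx : ⟪B x - x, t⟫_ℝ = 0 :=
      B.toLinearIsometry.inner_apply_sub_self_eq_zero_of_apply_eq hBt x
    have hsplit : t = (A y - y) - (B x - x) := by rw [ht_def]; abel
    rw [← inner_self_eq_zero (𝕜 := ℝ)]
    calc ⟪t, t⟫_ℝ = ⟪(A y - y) - (B x - x), t⟫_ℝ := by rw [← hsplit]
      _ = 0 := by rw [inner_sub_left, hAy, hBx, sub_zero]
  rw [← commutatorElement_eq_one_iff_mul_comm]
  ext1 v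
  rw [hcomm, ht, add_zero, IsometryEquiv.coe_one, id]
end

section
/- Let H be a closed abelian subgroup of the isometry group Isom(ℝ^l) of Euclidean space ℝ^l whose action on ℝ^l is transitive. Then every element of H is a translation, and H equals the full group of translations of ℝ^l (so H is isomorphic to ℝ^l as a topological group). -/
private lemma key_trans {l : ℕ}
    (H : Subgroup (EuclideanSpace ℝ (Fin l) ≃ᵢ EuclideanSpace ℝ (Fin l)))
    (habel : ∀ a ∈ H, ∀ b ∈ H, a * b = b * a)
    (htrans : ∀ v w : EuclideanSpace ℝ (Fin l), ∃ h ∈ H, h v = w)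
    {f : EuclideanSpace ℝ (Fin l) ≃ᵢ EuclideanSpace ℝ (Fin l)} (hf : f ∈ H) :
    ∀ v, f v = v + f 0 := by
  have key : ∀ w, ‖f.toRealLinearIsometryEquiv w - w‖ ≤ 2 * ‖f 0‖ := by
    intro w
    obtain ⟨h, hH, h0⟩ := htrans 0 w
    have comm : f (h 0) = h (f 0) := by
      have := habel f hf h hH
      have := congrArg (fun g : EuclideanSpace ℝ (Fin l) ≃ᵢ EuclideanSpace ℝ (Fin l) =>
        g 0) this
      simpa [IsometryEquiv.mul_apply] using this
    have hB : ‖h (f 0) - h 0‖ = ‖f 0‖ := by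
      have := h.toRealLinearIsometryEquiv.norm_map (f 0)
      simpa using this
    have : f.toRealLinearIsometryEquiv w - w = (h (f 0) - h 0) - f 0 := by
      rw [f.toRealLinearIsometryEquiv_apply, ← h0, comm]; abel
    rw [this]
    calc ‖(h (f 0) - h 0) - f 0‖ ≤ ‖h (f 0) - h 0‖ + ‖f 0‖ := norm_sub_le _ _
      _ = 2 * ‖f 0‖ := by rw [hB]; ring
  have hid : ∀ u, f.toRealLinearIsometryEquiv u = u := by
    intro u
    by_contra hne
    have hpos : 0 < ‖f.toRealLinearIsometryEquiv u - u‖ := by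
      rwa [norm_pos_iff, sub_ne_zero]
    obtain ⟨n, hn⟩ := exists_nat_gt (2 * ‖f 0‖ / ‖f.toRealLinearIsometryEquiv u - u‖)
    have h1 : ‖f.toRealLinearIsometryEquiv ((n : ℝ) • u) - (n : ℝ) • u‖
        = (n : ℝ) * ‖f.toRealLinearIsometryEquiv u - u‖ := by
      rw [map_smul, ← smul_sub, norm_smul]
      simp
    have h2 := key ((n : ℝ) • u)
    rw [h1] at h2
    have := (div_lt_iff₀ hpos).mp hn
    linarith
  intro v
  have := hid v
  rw [f.toRealLinearIsometryEquiv_apply] at this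
  exact sub_eq_iff_eq_add.mp this

/-- A closed abelian subgroup of `Isom(ℝˡ)` (closedness taken in the compact-open topology,
via the natural embedding into `C(ℝˡ, ℝˡ)`) acting transitively on `ℝˡ` consists exactly of
all the translations of `ℝˡ`. -/
theorem stmt_3 (l : ℕ)
    (H : Subgroup (EuclideanSpace ℝ (Fin l) ≃ᵢ EuclideanSpace ℝ (Fin l)))
    (hclosed : IsClosed ((fun h : EuclideanSpace ℝ (Fin l) ≃ᵢ EuclideanSpace ℝ (Fin l) =>
        (⟨h, h.continuous⟩ : C(EuclideanSpace ℝ (Fin l), EuclideanSpace ℝ (Fin l)))) ''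
        (H : Set (EuclideanSpace ℝ (Fin l) ≃ᵢ EuclideanSpace ℝ (Fin l)))))
    (habel : ∀ a ∈ H, ∀ b ∈ H, a * b = b * a)
    (htrans : ∀ v w : EuclideanSpace ℝ (Fin l), ∃ h ∈ H, h v = w) :
    ∀ f : EuclideanSpace ℝ (Fin l) ≃ᵢ EuclideanSpace ℝ (Fin l),
      f ∈ H ↔ ∃ t : EuclideanSpace ℝ (Fin l), ∀ v, f v = v + t := by
  intro f
  constructor
  · intro hf
    exact ⟨f 0, key_trans H habel htrans hf⟩
  · rintro ⟨t, ht⟩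
    obtain ⟨h, hH, h0⟩ := htrans 0 t
    have hhv := key_trans H habel htrans hH
    have : f = h := by
      ext v
      rw [ht v, hhv v, h0]
    rw [this]
    exact hH
end

section
/- Let H be a closed nilpotent subgroup of the isometry group Isom(ℝ^l) of Euclidean space ℝ^l whose action on ℝ^l is transitive. Then every element of H is a translation, and H equals the full group of translations of ℝ^l (so H is isomorphic to ℝ^l as a topological group). -/
/-!
Every isometry of a real inner product space is affine (Mazur–Ulam). A nontrivial nilpotent group
has a nontrivial centre, and a central element `z` of a transitive group of isometries moves every
point by the same distance, which by the parallelogram law forces `z` to be a translation.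

Let `W` be the space of vectors `w` such that translation by `w` commutes with all of `H`. The group
`H` acts on `E ⧸ W ≃ Wᗮ` by isometries, nilpotently and transitively; if `Wᗮ ≠ 0`, a nontrivial
central translation of this action would be a vector of `Wᗮ` lying in `W`. Hence `W = E`, i.e. every
element of `H` commutes with all translations, and is therefore itself a translation.
-/

open Submodule

namespace IsometryEquiv

section NormedSpace

variable {E : Type*} [NormedAddCommGroup E] [NormedSpace ℝ E]

theorem apply_eq_linear_add (f : E ≃ᵢ E) (x : E) :
    f x = f.toRealLinearIsometryEquiv x + f 0 := by
  rw [toRealLinearIsometryEquiv_apply, sub_add_cancel]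

theorem forall_apply_add_eq_add_iff (f : E ≃ᵢ E) (w : E) :
    (∀ x, f (x + w) = f x + w) ↔ f.toRealLinearIsometryEquiv w = w := by
  constructor
  · intro h
    rw [toRealLinearIsometryEquiv_apply, ← zero_add w, h, zero_add, add_sub_cancel_left]
  · intro h x
    rw [apply_eq_linear_add f, map_add, h, apply_eq_linear_add f x, add_right_comm]

end NormedSpace

theorem dist_apply_self_eq_of_commute {α : Type*} [PseudoMetricSpace α]
    {H : Subgroup (α ≃ᵢ α)} (htrans : ∀ x y : α, ∃ h ∈ H, h x = y) {z : α ≃ᵢ α}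
    (hz : ∀ h ∈ H, Commute h z) (x y : α) : dist (z y) y = dist (z x) x := by
  obtain ⟨h, hh, rfl⟩ := htrans x y
  rw [← mul_apply z h, ← (hz h hh).eq, mul_apply, h.dist_eq]

variable {E : Type*} [NormedAddCommGroup E] [InnerProductSpace ℝ E]

theorem apply_eq_add_of_dist_apply_self_eq (f : E ≃ᵢ E)
    (hf : ∀ v, dist (f v) v = dist (f 0) 0) (v : E) : f v = v + f 0 := by
  set u := f.toRealLinearIsometryEquiv v - v with hu_def
  have hplus : f v - v = f 0 + u := by
    rw [apply_eq_linear_add f v, hu_def]; abel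
  have hminus : f (-v) - -v = f 0 - u := by
    rw [apply_eq_linear_add f (-v), map_neg, hu_def]; abel
  have hu : ‖u‖ = 0 := by
    have := parallelogram_law_with_norm ℝ (f 0) u
    rw [← hplus, ← hminus, ← dist_eq_norm, ← dist_eq_norm, hf v, hf (-v), dist_zero_right] at this
    nlinarith [norm_nonneg u]
  rw [apply_eq_linear_add f, sub_eq_zero.mp (norm_eq_zero.mp hu)]

theorem apply_eq_add_of_commute {H : Subgroup (E ≃ᵢ E)} (htrans : ∀ v w : E, ∃ h ∈ H, h v = w)
    {z : E ≃ᵢ E} (hz : ∀ h ∈ H, Commute h z) (v : E) : z v = v + z 0 :=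
  z.apply_eq_add_of_dist_apply_self_eq (fun v ↦ dist_apply_self_eq_of_commute htrans hz 0 v) v

end IsometryEquiv

variable {E : Type*} [NormedAddCommGroup E] [InnerProductSpace ℝ E]

def translationCentralizer (H : Subgroup (E ≃ᵢ E)) : Submodule ℝ E where
  carrier := {w | ∀ h ∈ H, ∀ x, h (x + w) = h x + w}
  add_mem' {a b} ha hb h hh x := by rw [← add_assoc, hb h hh, ha h hh, add_assoc]
  zero_mem' := by simp
  smul_mem' c w hw h hh := (h.forall_apply_add_eq_add_iff _).mpr <| by
    rw [map_smul, (h.forall_apply_add_eq_add_iff w).mp (hw h hh)]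

theorem isClosed_translationCentralizer (H : Subgroup (E ≃ᵢ E)) :
    IsClosed (translationCentralizer H : Set E) := by
  simp only [translationCentralizer, Submodule.coe_set_mk, AddSubmonoid.coe_set_mk,
    AddSubsemigroup.coe_set_mk, Set.ofPred_forall]
  exact isClosed_biInter fun h _ ↦ isClosed_iInter fun x ↦
    isClosed_eq (by fun_prop) (by fun_prop)

theorem translationCentralizer_ne_bot [Nontrivial E] {H : Subgroup (E ≃ᵢ E)}
    [Group.IsNilpotent H] (htrans : ∀ v w : E, ∃ h ∈ H, h v = w) :
    translationCentralizer H ≠ ⊥ := by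
  have : Nontrivial H := by
    obtain ⟨v, hv⟩ := exists_ne (0 : E)
    obtain ⟨h, hh, rfl⟩ := htrans 0 v
    refine nontrivial_of_ne ⟨h, hh⟩ 1 fun h1 ↦ hv ?_
    simp [show h = 1 from congrArg Subtype.val h1]
  obtain ⟨z, hz1⟩ := Subgroup.ne_bot_iff_exists_ne_one.mp (Group.IsNilpotent.center_ne_bot (G := H))
  set z' : E ≃ᵢ E := ((z : H) : E ≃ᵢ E)
  have hcomm : ∀ h ∈ H, Commute h z' := fun h hh ↦
    congrArg Subtype.val (Subgroup.mem_center_iff.mp z.2 ⟨h, hh⟩)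
  have hz := IsometryEquiv.apply_eq_add_of_commute htrans hcomm
  refine (Submodule.ne_bot_iff _).mpr ⟨z' 0, fun h hh x ↦ ?_, fun h0 ↦ hz1 ?_⟩
  · rw [← hz, ← IsometryEquiv.mul_apply, (hcomm h hh).eq, IsometryEquiv.mul_apply, hz]
  · ext x
    simp [z', hz x, h0]

theorem mem_centralizer_image_addRight_iff {G : Type*} [SeminormedAddCommGroup G] {W : Set G}
    {f : G ≃ᵢ G} :
    f ∈ Subgroup.centralizer (IsometryEquiv.addRight '' W) ↔
      ∀ w ∈ W, ∀ x, f (x + w) = f x + w := by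
  simp only [Subgroup.mem_centralizer_iff, Set.forall_mem_image, IsometryEquiv.ext_iff,
    IsometryEquiv.mul_apply, IsometryEquiv.addRight_apply, eq_comm]

theorem toRealLinearIsometryEquiv_mem_orthogonal {W : Submodule ℝ E} {f : E ≃ᵢ E}
    (hf : ∀ w ∈ W, ∀ x, f (x + w) = f x + w) {k : E} (hk : k ∈ Wᗮ) :
    f.toRealLinearIsometryEquiv k ∈ Wᗮ := by
  intro w hw
  rw [← (f.forall_apply_add_eq_add_iff w).mp (hf w hw), LinearIsometryEquiv.inner_map_map]
  exact hk w hw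

section ProjectedAction

variable (W : Submodule ℝ E) [W.HasOrthogonalProjection]

/-- The action of `f` on `E ⧸ W`, realized on `Wᗮ`. -/
noncomputable def projectedMap (f : E ≃ᵢ E) (k : Wᗮ) : Wᗮ := Wᗮ.orthogonalProjectionOnto (f k)

theorem projectedMap_one (k : Wᗮ) : projectedMap W 1 k = k :=
  orthogonalProjectionOnto_mem_subspace_eq_self k

variable {W} {f : E ≃ᵢ E} (hf : ∀ w ∈ W, ∀ x, f (x + w) = f x + w)
include hf

theorem orthogonalProjectionOnto_apply_orthogonalProjectionOnto (x : E) :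
    Wᗮ.orthogonalProjectionOnto (f (Wᗮ.orthogonalProjectionOnto x)) =
      Wᗮ.orthogonalProjectionOnto (f x) := by
  have hW := W.starProjection_apply_mem x
  conv_rhs => rw [← W.starProjection_add_starProjection_orthogonal x, add_comm, hf _ hW,
    map_add, orthogonalProjectionOnto_orthogonal_apply_eq_zero hW, add_zero]
  rfl

theorem projectedMap_mul (g : E ≃ᵢ E) (k : Wᗮ) :
    projectedMap W (f * g) k = projectedMap W f (projectedMap W g k) :=
  (orthogonalProjectionOnto_apply_orthogonalProjectionOnto hf (g k)).symm

theorem coe_projectedMap (k : Wᗮ) :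
    (projectedMap W f k : E) = f.toRealLinearIsometryEquiv k + Wᗮ.starProjection (f 0) := by
  rw [projectedMap, ← starProjection_apply, f.apply_eq_linear_add, map_add,
    starProjection_eq_self_iff.mpr (toRealLinearIsometryEquiv_mem_orthogonal hf k.2)]

theorem isometry_projectedMap : Isometry (projectedMap W f) :=
  Isometry.of_dist_eq fun k k' ↦ by
    rw [Subtype.dist_eq, Subtype.dist_eq, coe_projectedMap hf, coe_projectedMap hf,
      dist_add_right, LinearIsometryEquiv.dist_map]

theorem toRealLinearIsometryEquiv_apply_eq_of_projectedMap_add {t : Wᗮ}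
    (ht : projectedMap W f t = projectedMap W f 0 + t) :
    f.toRealLinearIsometryEquiv t = t := by
  have := congrArg Subtype.val ht
  rw [Submodule.coe_add, coe_projectedMap hf, coe_projectedMap hf, Submodule.coe_zero,
    f.toRealLinearIsometryEquiv.map_zero, zero_add,
    add_comm (f.toRealLinearIsometryEquiv t)] at this
  exact add_left_cancel this

end ProjectedAction

noncomputable def projectedHom (W : Submodule ℝ E) [W.HasOrthogonalProjection] :
    Subgroup.centralizer (IsometryEquiv.addRight '' (W : Set E)) →* (Wᗮ ≃ᵢ Wᗮ) where
  toFun f := IsometryEquiv.mk' (projectedMap W f) (projectedMap W (f⁻¹ : _))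
    (fun k ↦ by
      rw [← projectedMap_mul (mem_centralizer_image_addRight_iff.mp f.2), ← Subgroup.coe_mul,
        mul_inv_cancel, Subgroup.coe_one, projectedMap_one])
    (isometry_projectedMap (mem_centralizer_image_addRight_iff.mp f.2))
  map_one' := IsometryEquiv.ext (projectedMap_one W)
  map_mul' f g :=
    IsometryEquiv.ext (projectedMap_mul (mem_centralizer_image_addRight_iff.mp f.2) g)

theorem translationCentralizer_eq_top [CompleteSpace E] {H : Subgroup (E ≃ᵢ E)}
    [Group.IsNilpotent H] (htrans : ∀ v w : E, ∃ h ∈ H, h v = w) :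
    translationCentralizer H = ⊤ := by
  set W := translationCentralizer H
  have : CompleteSpace W := (isClosed_translationCentralizer H).isComplete.completeSpace_coe
  rw [← Submodule.orthogonal_eq_bot_iff]
  by_contra hne
  have : Nontrivial Wᗮ := Submodule.nontrivial_iff_ne_bot.mpr hne
  have hle : H ≤ Subgroup.centralizer (IsometryEquiv.addRight '' (W : Set E)) :=
    fun h hh ↦ mem_centralizer_image_addRight_iff.mpr fun w hw ↦ hw h hh
  set φ := (projectedHom W).comp (Subgroup.inclusion hle)
  have : Group.IsNilpotent φ.range := Group.nilpotent_of_surjective _ φ.rangeRestrict_surjective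
  have htrans' : ∀ v w : Wᗮ, ∃ g ∈ φ.range, g v = w := by
    intro v w
    obtain ⟨h, hh, hvw⟩ := htrans v w
    refine ⟨φ ⟨h, hh⟩, ⟨_, rfl⟩, ?_⟩
    change Wᗮ.orthogonalProjectionOnto (h v) = w
    rw [hvw, orthogonalProjectionOnto_mem_subspace_eq_self]
  obtain ⟨t, ht, ht0⟩ := (Submodule.ne_bot_iff _).mp (translationCentralizer_ne_bot htrans')
  have htW : (t : E) ∈ W := by
    intro h hh
    have hφ := ht _ ⟨⟨h, hh⟩, rfl⟩ 0
    rw [zero_add] at hφ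
    exact (h.forall_apply_add_eq_add_iff t).mpr <|
      toRealLinearIsometryEquiv_apply_eq_of_projectedMap_add (fun w (hw : w ∈ W) ↦ hw h hh) hφ
  exact ht0 (Subtype.ext (inner_self_eq_zero.mp (t.2 _ htW)))

theorem apply_eq_add_of_isNilpotent [CompleteSpace E] {H : Subgroup (E ≃ᵢ E)}
    [Group.IsNilpotent H] (htrans : ∀ v w : E, ∃ h ∈ H, h v = w) {h : E ≃ᵢ E} (hh : h ∈ H)
    (v : E) : h v = v + h 0 := by
  have hv : v ∈ translationCentralizer H := translationCentralizer_eq_top htrans ▸ mem_top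
  simpa [add_comm] using hv h hh 0

theorem stmt_4_general (l : ℕ)
    (H : Subgroup (EuclideanSpace ℝ (Fin l) ≃ᵢ EuclideanSpace ℝ (Fin l)))
    (hnilp : Group.IsNilpotent H)
    (htrans : ∀ v w : EuclideanSpace ℝ (Fin l), ∃ h ∈ H, h v = w) :
    ∀ f : EuclideanSpace ℝ (Fin l) ≃ᵢ EuclideanSpace ℝ (Fin l),
      f ∈ H ↔ ∃ t : EuclideanSpace ℝ (Fin l), ∀ v, f v = v + t := by
  intro f
  constructor
  · exact fun hf ↦ ⟨f 0, apply_eq_add_of_isNilpotent htrans hf⟩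
  · rintro ⟨t, hf⟩
    obtain ⟨h, hh, rfl⟩ := htrans 0 t
    have hfh : f = h := IsometryEquiv.ext fun v ↦
      (hf v).trans (apply_eq_add_of_isNilpotent htrans hh v).symm
    exact hfh ▸ hh

/-- A closed nilpotent subgroup of `Isom(ℝˡ)` (closedness taken in the compact-open topology,
via the natural embedding into `C(ℝˡ, ℝˡ)`) acting transitively on `ℝˡ` consists exactly of
all the translations of `ℝˡ`. -/
theorem stmt_4 (l : ℕ)
    (H : Subgroup (EuclideanSpace ℝ (Fin l) ≃ᵢ EuclideanSpace ℝ (Fin l)))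
    (hclosed : IsClosed ((fun h : EuclideanSpace ℝ (Fin l) ≃ᵢ EuclideanSpace ℝ (Fin l) =>
        (⟨h, h.continuous⟩ : C(EuclideanSpace ℝ (Fin l), EuclideanSpace ℝ (Fin l)))) ''
        (H : Set (EuclideanSpace ℝ (Fin l) ≃ᵢ EuclideanSpace ℝ (Fin l)))))
    (hnilp : Group.IsNilpotent H)
    (htrans : ∀ v w : EuclideanSpace ℝ (Fin l), ∃ h ∈ H, h v = w) :
    ∀ f : EuclideanSpace ℝ (Fin l) ≃ᵢ EuclideanSpace ℝ (Fin l),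
      f ∈ H ↔ ∃ t : EuclideanSpace ℝ (Fin l), ∀ v, f v = v + t :=
  stmt_4_general l H hnilp htrans
end

section
/- Every nilpotent subgroup Γ of the isometry group Isom(ℝ^k) of Euclidean space ℝ^k is virtually abelian; that is, Γ contains an abelian subgroup of finite index. -/
/-!
Write `L : Isom(ℝᵏ) → O(k)` for the linear part and `γ_j` for the lower central series
(`γ_0 = G`). Composed with the complexification `O(k) ↪ U(k)`, `L` is a unitary representation
`ρ` of the nilpotent group `Γ`, and such a representation is commutative on a finite-index
subgroup. This goes by induction on the dimension and on the least `c` with `ρ(γ_c) = 1`: either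
some element of `γ_{c-1}`, which is central modulo `ker ρ`, acts by a non-scalar, and one of its
eigenspaces splits `ρ` orthogonally; or all of `γ_{c-1}` acts by scalars. Then for `u ∈ γ_{c-2}`
the map `g ↦ ρ ⁅g, u⁆` is a homomorphism whose values are scalars of determinant one, hence take
finitely many values, so a finite-index subgroup centralises `ρ(γ_{c-2})` and `c` drops.

It remains to see that a nilpotent group `A` of isometries whose linear parts commute is abelian.
Its commutator subgroup consists of translations, and `⁅τ_v, g⁆ = τ_{v - L(g) v}`. By descending
induction along `γ_j`, using that an orthogonal `t` with `(1 - t)² v = 0` has `(1 - t) v = 0`, the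
translation vectors of `[A, A]` are fixed by `L(A)`. If `L(g)` fixes `w`, then
`⟪w, g x⟫ = ⟪w, x⟫ + ⟪w, g 0⟫`, so `g ↦ ⟪w, g 0⟫` is additive on such `g` and kills their
commutators; for `p, q ∈ A` and `w` the translation vector of `⁅p, q⁆` this gives `‖w‖² = 0`.
-/

open scoped commutatorElement InnerProductSpace

namespace LinearIsometryEquiv

variable {𝕜 F : Type*} [RCLike 𝕜] [NormedAddCommGroup F] [InnerProductSpace 𝕜 F]

lemma inner_map_right_of_map_eq (t : F ≃ₗᵢ[𝕜] F) {w : F} (hw : t w = w) (x : F) :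
    ⟪w, t x⟫_𝕜 = ⟪w, x⟫_𝕜 :=
  calc ⟪w, t x⟫_𝕜 = ⟪t w, t x⟫_𝕜 := by rw [hw]
    _ = ⟪w, x⟫_𝕜 := t.inner_map_map w x

lemma apply_eq_self_of_map_sub_eq (t : F ≃ₗᵢ[𝕜] F) {v : F} (h : t (v - t v) = v - t v) :
    t v = v := by
  have h0 : ⟪v - t v, v - t v⟫_𝕜 = 0 := by
    rw [inner_sub_right, t.inner_map_right_of_map_eq h, sub_self]
  exact (sub_eq_zero.mp (inner_self_eq_zero.mp h0)).symm

end LinearIsometryEquiv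

namespace IsometryEquiv

variable {E : Type*} [NormedAddCommGroup E] [InnerProductSpace ℝ E]

noncomputable def linearPart : (E ≃ᵢ E) →* (E ≃ₗᵢ[ℝ] E) where
  toFun f := f.toRealLinearIsometryEquiv
  map_one' := by ext x; simp [toRealLinearIsometryEquiv_apply]
  map_mul' f g := by
    ext x
    simp only [LinearIsometryEquiv.coe_mul, Function.comp_apply, toRealLinearIsometryEquiv_apply,
      mul_apply]
    rw [← toRealLinearIsometryEquiv_apply f, map_sub, toRealLinearIsometryEquiv_apply,
      toRealLinearIsometryEquiv_apply]
    abel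

lemma linearPart_apply (f : E ≃ᵢ E) (x : E) : linearPart f x = f x - f 0 :=
  f.toRealLinearIsometryEquiv_apply x

lemma apply_eq_linearPart_add (f : E ≃ᵢ E) (x : E) : f x = linearPart f x + f 0 := by
  rw [linearPart_apply, sub_add_cancel]

lemma apply_eq_add_of_linearPart_eq_one {f : E ≃ᵢ E} (hf : linearPart f = 1) (x : E) :
    f x = x + f 0 := by
  rw [apply_eq_linearPart_add, hf, LinearIsometryEquiv.coe_one, id]

lemma inner_apply_of_linearPart_apply_eq {f : E ≃ᵢ E} {w : E} (hw : linearPart f w = w)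
    (x : E) : ⟪w, f x⟫_ℝ = ⟪w, x⟫_ℝ + ⟪w, f 0⟫_ℝ := by
  rw [apply_eq_linearPart_add f x, inner_add_right, (linearPart f).inner_map_right_of_map_eq hw]

lemma inner_commutatorElement_apply_zero {p q : E ≃ᵢ E} {w : E} (hp : linearPart p w = w)
    (hq : linearPart q w = w) : ⟪w, ⁅p, q⁆ 0⟫_ℝ = 0 := by
  have inv : ∀ {f : E ≃ᵢ E}, linearPart f w = w →
      linearPart f⁻¹ w = w ∧ ⟪w, f⁻¹ 0⟫_ℝ = -⟪w, f 0⟫_ℝ := by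
    intro f hf
    refine ⟨by rw [map_inv, LinearIsometryEquiv.coe_inv, LinearIsometryEquiv.symm_apply_eq, hf],
      ?_⟩
    have h := inner_apply_of_linearPart_apply_eq hf (f⁻¹ 0)
    rw [apply_inv_self, inner_zero_right] at h
    linarith
  obtain ⟨hp', hp''⟩ := inv hp
  obtain ⟨hq', hq''⟩ := inv hq
  change ⟪w, p (q (p⁻¹ (q⁻¹ 0)))⟫_ℝ = 0
  rw [inner_apply_of_linearPart_apply_eq hp, inner_apply_of_linearPart_apply_eq hq,
    inner_apply_of_linearPart_apply_eq hp', hp'', hq'']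
  ring

lemma commutatorElement_apply_zero_of_linearPart_eq_one {f : E ≃ᵢ E} (hf : linearPart f = 1)
    (q : E ≃ᵢ E) : ⁅f, q⁆ 0 = f 0 - linearPart q (f 0) := by
  have hinv : ∀ y, f⁻¹ y = y - f 0 := fun y => by
    rw [eq_sub_iff_add_eq, ← apply_eq_add_of_linearPart_eq_one hf, apply_inv_self]
  change f (q (f⁻¹ (q⁻¹ 0))) = _
  rw [apply_eq_add_of_linearPart_eq_one hf, hinv, apply_eq_linearPart_add q, map_sub,
    linearPart_apply q (q⁻¹ 0), apply_inv_self]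
  abel

section NilpotentGroup

variable {G : Type*} [Group G] (φ : G →* (E ≃ᵢ E))

lemma linearPart_eq_one_of_mem_commutator
    (hφ : ∀ a b, Commute (linearPart (φ a)) (linearPart (φ b))) {x : G}
    (hx : x ∈ commutator G) : linearPart (φ x) = 1 := by
  have hle : commutator G ≤ (linearPart.comp φ).ker := by
    rw [commutator_def, Subgroup.commutator_le]
    intro a _ b _
    rw [MonoidHom.mem_ker, map_commutatorElement]
    exact commutatorElement_eq_one_iff_commute.mpr (hφ a b)
  exact hle hx

lemma linearPart_apply_apply_zero_of_mem_commutator [hG : Group.IsNilpotent G]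
    (hφ : ∀ a b, Commute (linearPart (φ a)) (linearPart (φ b))) {x : G}
    (hx : x ∈ commutator G) (g : G) : linearPart (φ g) (φ x 0) = φ x 0 := by
  obtain ⟨n, hn⟩ := Subgroup.nilpotent_iff_lowerCentralSeries.mp hG
  -- descending induction on `j`, starting from `γ n = ⊥`
  suffices key : ∀ i j, n ≤ j + i → ∀ y ∈ (⊤ : Subgroup G).lowerCentralSeries (j + 1),
      linearPart (φ g) (φ y 0) = φ y 0 from
    key n 0 (by omega) x (by rwa [Subgroup.top_lowerCentralSeries_one])
  intro i
  induction i with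
  | zero =>
    intro j hj y hy
    have hy1 : y = 1 := by
      have := Subgroup.lowerCentralSeries_antitone _ (by omega : n ≤ j + 1) hy
      rwa [hn, Subgroup.mem_bot] at this
    simp [hy1]
  | succ i ih =>
    intro j hj y hy
    have hyg : ⁅y, g⁆ ∈ (⊤ : Subgroup G).lowerCentralSeries (j + 1 + 1) :=
      Subgroup.commutator_mem_commutator hy (Subgroup.mem_top g)
    have hy1 : linearPart (φ y) = 1 := by
      refine linearPart_eq_one_of_mem_commutator φ hφ ?_
      rw [← Subgroup.top_lowerCentralSeries_one]
      exact Subgroup.lowerCentralSeries_antitone _ (by omega) hy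
    have h := ih (j + 1) (by omega) _ hyg
    rw [map_commutatorElement, commutatorElement_apply_zero_of_linearPart_eq_one hy1] at h
    exact (linearPart (φ g)).apply_eq_self_of_map_sub_eq h

theorem commute_of_isNilpotent [Group.IsNilpotent G]
    (hφ : ∀ a b, Commute (linearPart (φ a)) (linearPart (φ b))) (a b : G) :
    Commute (φ a) (φ b) := by
  have hc : ⁅a, b⁆ ∈ commutator G :=
    Subgroup.commutator_mem_commutator (Subgroup.mem_top a) (Subgroup.mem_top b)
  have h0 : φ ⁅a, b⁆ 0 = 0 := by
    have h := inner_commutatorElement_apply_zero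
      (linearPart_apply_apply_zero_of_mem_commutator φ hφ hc a)
      (linearPart_apply_apply_zero_of_mem_commutator φ hφ hc b)
    rwa [← map_commutatorElement, inner_self_eq_zero] at h
  rw [← commutatorElement_eq_one_iff_commute, ← map_commutatorElement]
  ext x
  rw [apply_eq_add_of_linearPart_eq_one (linearPart_eq_one_of_mem_commutator φ hφ hc), h0,
    add_zero]
  rfl

end NilpotentGroup

end IsometryEquiv

namespace MonoidHom

variable {G H M : Type*} [Group G] [Group H] [Monoid M]

def IsVirtuallyCommutative (f : G →* M) : Prop :=
  ∃ A : Subgroup G, A.FiniteIndex ∧ ∀ a ∈ A, ∀ b ∈ A, Commute (f a) (f b)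

lemma IsVirtuallyCommutative.of_comp_subtype {f : G →* M} {A : Subgroup G} (hA : A.FiniteIndex)
    (h : (f.comp A.subtype).IsVirtuallyCommutative) : f.IsVirtuallyCommutative := by
  obtain ⟨B, hB, hBc⟩ := h
  refine ⟨B.map A.subtype, ⟨?_⟩, ?_⟩
  · rw [Subgroup.index_map_subtype]
    exact mul_ne_zero hB.index_ne_zero hA.index_ne_zero
  · rintro _ ⟨a, ha, rfl⟩ _ ⟨b, hb, rfl⟩
    exact hBc a ha b hb

def commutatorWith (φ : G →* H) (u : G) (hu : ∀ g : G, φ ⁅g, u⁆ ∈ Subgroup.center H) :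
    G →* H where
  toFun g := φ ⁅g, u⁆
  map_one' := by simp
  map_mul' g h := by
    have hconj : φ ⁅g * h, u⁆ = φ g * φ ⁅h, u⁆ * (φ g)⁻¹ * φ ⁅g, u⁆ := by
      simp only [commutatorElement_def, map_mul, map_inv]
      group
    rw [hconj, Subgroup.mem_center_iff.mp (hu h) (φ g), mul_inv_cancel_right,
      Subgroup.mem_center_iff.mp (hu h)]

end MonoidHom

namespace Subrepresentation

variable {k G V : Type*} [Semiring k] [Monoid G] [AddCommMonoid V] [Module k V]
  {ρ : Representation k G V}

lemma toRepresentation_eq_one (W : Subrepresentation ρ) {g : G} (hg : ρ g = 1) :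
    W.toRepresentation g = 1 := by
  ext v
  change ρ g v = v
  rw [hg, Module.End.one_apply]

end Subrepresentation

namespace Representation

section Field

variable {k G V : Type*} [Field k] [Group G] [AddCommGroup V] [Module k V]
  (ρ : Representation k G V)

lemma mem_ker_asGroupHom (g : G) : g ∈ ρ.asGroupHom.ker ↔ ρ g = 1 := by
  rw [MonoidHom.mem_ker, Units.ext_iff, asGroupHom_apply, Units.val_one]

lemma apply_commutatorElement_eq_one_iff (g h : G) :
    ρ ⁅g, h⁆ = 1 ↔ Commute (ρ g) (ρ h) := by
  rw [← mem_ker_asGroupHom, MonoidHom.mem_ker, map_commutatorElement,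
    commutatorElement_eq_one_iff_commute, ← Commute.units_val_iff, asGroupHom_apply,
    asGroupHom_apply]

lemma pow_finrank_eq_one_of_apply_commutatorElement_eq_algebraMap {g h : G} {μ : k}
    (hμ : ρ ⁅g, h⁆ = algebraMap k _ μ) : μ ^ Module.finrank k V = 1 := by
  have hdet : (Units.map (LinearMap.det : Module.End k V →* k)).comp ρ.asGroupHom ⁅g, h⁆ = 1 := by
    rw [map_commutatorElement]
    exact commutatorElement_eq_one_iff_commute.mpr (Commute.all _ _)
  simpa only [MonoidHom.coe_comp, Function.comp_apply, Units.coe_map, asGroupHom_apply,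
    Units.val_one, hμ, Algebra.algebraMap_eq_smul_one, LinearMap.det_smul, map_one, mul_one]
    using congr_arg Units.val hdet

variable [FiniteDimensional k V]

lemma exists_finiteIndex_commute_of_scalar_commutators (u : G)
    (hu : ∀ g : G, ∃ μ : k, ρ ⁅g, u⁆ = algebraMap k _ μ) :
    ∃ H : Subgroup G, H.FiniteIndex ∧ ∀ g ∈ H, Commute (ρ g) (ρ u) := by
  obtain hV | hV := subsingleton_or_nontrivial V
  · exact ⟨⊤, inferInstance, fun _ _ => Subsingleton.elim _ _⟩
  have hcentral : ∀ g : G, ρ.asGroupHom ⁅g, u⁆ ∈ Subgroup.center _ := by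
    intro g
    obtain ⟨μ, hμ⟩ := hu g
    refine Subgroup.mem_center_iff.mpr fun x => Units.ext ?_
    rw [Units.val_mul, Units.val_mul, asGroupHom_apply, hμ]
    exact (Algebra.commutes μ _).symm
  set ψ := ρ.asGroupHom.commutatorWith u hcentral
  have hrange : (Set.range ψ).Finite := by
    refine (((Polynomial.nthRootsFinset (Module.finrank k V) (1 : k)).finite_toSet.image
      (algebraMap k (Module.End k V))).preimage Units.val_injective.injOn).subset ?_
    rintro _ ⟨g, rfl⟩
    obtain ⟨μ, hμ⟩ := hu g
    refine ⟨μ, ?_, hμ.symm.trans (asGroupHom_apply ρ _).symm⟩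
    rw [Finset.mem_coe, Polynomial.mem_nthRootsFinset Module.finrank_pos]
    exact ρ.pow_finrank_eq_one_of_apply_commutatorElement_eq_algebraMap hμ
  have : Finite ψ.range := by
    rw [← SetLike.coe_sort_coe, MonoidHom.coe_range]
    exact hrange.to_subtype
  exact ⟨ψ.ker, inferInstance, fun g hg =>
    (ρ.apply_commutatorElement_eq_one_iff g u).mp ((ρ.mem_ker_asGroupHom _).mp hg)⟩

lemma exists_finiteIndex_commute_of_scalar_commutators_set (N : Set G)
    (hN : ∀ g : G, ∀ u ∈ N, ∃ μ : k, ρ ⁅g, u⁆ = algebraMap k _ μ) :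
    ∃ H : Subgroup G, H.FiniteIndex ∧ ∀ g ∈ H, ∀ u ∈ N, Commute (ρ g) (ρ u) := by
  obtain ⟨κ, a, -, hspan, hli⟩ := exists_linearIndependent' k fun u : N => ρ u
  have : Finite κ := hli.finite
  choose H hH hHc using fun i =>
    ρ.exists_finiteIndex_commute_of_scalar_commutators (a i) fun g => hN g _ (a i).2
  refine ⟨⨅ i, H i, Subgroup.finiteIndex_iInf hH, fun g hg u hu => ?_⟩
  have hle : Submodule.span k (Set.range ((fun u : N => ρ u) ∘ a)) ≤
      (Subalgebra.centralizer k {ρ g}).toSubmodule := by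
    rw [Submodule.span_le]
    rintro _ ⟨i, rfl⟩
    exact (Subalgebra.mem_centralizer_iff k).mpr fun _ hx =>
      hx ▸ hHc i g (Subgroup.mem_iInf.mp hg i)
  have hmem : ρ u ∈ Submodule.span k (Set.range fun u : N => ρ u) :=
    Submodule.subset_span ⟨⟨u, hu⟩, rfl⟩
  rw [← hspan] at hmem
  exact (Subalgebra.mem_centralizer_iff k).mp (hle hmem) (ρ g) rfl

lemma exists_finiteIndex_lowerCentralSeries_succ_le_ker (c : ℕ)
    (h : ∀ g : G, ∀ u ∈ (⊤ : Subgroup G).lowerCentralSeries c,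
      ∃ μ : k, ρ ⁅g, u⁆ = algebraMap k _ μ) :
    ∃ A : Subgroup G, A.FiniteIndex ∧
      ∀ x ∈ (⊤ : Subgroup A).lowerCentralSeries (c + 1), ρ x = 1 := by
  obtain ⟨A, hA, hAc⟩ := ρ.exists_finiteIndex_commute_of_scalar_commutators_set _ h
  refine ⟨A, hA, ?_⟩
  suffices hle : (⊤ : Subgroup A).lowerCentralSeries (c + 1) ≤
      (asGroupHom (ρ.comp A.subtype)).ker from
    fun x hx => (mem_ker_asGroupHom _ x).mp (hle hx)
  rw [Subgroup.lowerCentralSeries_succ, Subgroup.commutator_le]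
  intro y hy z _
  have hyG : (y : G) ∈ (⊤ : Subgroup G).lowerCentralSeries c := by
    have := Subgroup.mem_map_of_mem A.subtype hy
    rw [Subgroup.map_lowerCentralSeries] at this
    exact Subgroup.lowerCentralSeries_mono c le_top this
  rw [mem_ker_asGroupHom, apply_commutatorElement_eq_one_iff]
  exact (hAc z z.2 y hyG).symm

lemma exists_subrepresentation_ne_bot_ne_top [IsAlgClosed k] {z : G}
    (hz : ∀ g, Commute (ρ z) (ρ g)) (hns : ∀ μ : k, ρ z ≠ algebraMap k _ μ) :
    ∃ W : Subrepresentation ρ, W.toSubmodule ≠ ⊥ ∧ W.toSubmodule ≠ ⊤ := by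
  have : Nontrivial V := by
    by_contra hV
    rw [not_nontrivial_iff_subsingleton] at hV
    exact hns 0 (Subsingleton.elim _ _)
  obtain ⟨μ, hμ⟩ := Module.End.exists_eigenvalue (ρ z)
  let W : Subrepresentation ρ :=
    ⟨Module.End.eigenspace (ρ z) μ, fun g => Module.End.mapsTo_genEigenspace_of_comm (hz g) μ 1⟩
  refine ⟨W, hμ, fun htop => hns μ ?_⟩
  ext x
  have hx : x ∈ W.toSubmodule := htop ▸ Submodule.mem_top
  rw [Module.End.mem_eigenspace_iff.mp hx, Algebra.algebraMap_eq_smul_one]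
  rfl

end Field

section Unitary

variable {𝕜 G V : Type*} [RCLike 𝕜] [Group G] [NormedAddCommGroup V] [InnerProductSpace 𝕜 V]
  {ρ : Representation 𝕜 G V}

def IsUnitary (ρ : Representation 𝕜 G V) : Prop :=
  ∀ g v w, ⟪ρ g v, ρ g w⟫_𝕜 = ⟪v, w⟫_𝕜

lemma IsUnitary.comp {G' : Type*} [Group G'] (hρ : ρ.IsUnitary) (f : G' →* G) :
    IsUnitary (ρ.comp f) :=
  fun g => hρ (f g)

lemma IsUnitary.restrict (hρ : ρ.IsUnitary) (W : Subrepresentation ρ) :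
    W.toRepresentation.IsUnitary :=
  fun g v w => hρ g v w

noncomputable def IsUnitary.orthogonal (hρ : ρ.IsUnitary) (W : Subrepresentation ρ) :
    Subrepresentation ρ where
  toSubmodule := W.toSubmoduleᗮ
  apply_mem_toSubmodule g v hv := by
    rw [Submodule.mem_orthogonal] at hv ⊢
    intro u hu
    rw [← hρ g⁻¹, inv_self_apply]
    exact hv _ (W.apply_mem_toSubmodule g⁻¹ hu)

lemma IsUnitary.isVirtuallyCommutative_of_restrict [FiniteDimensional 𝕜 V] (hρ : ρ.IsUnitary)
    (W : Subrepresentation ρ) (h₁ : W.toRepresentation.IsVirtuallyCommutative)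
    (h₂ : (hρ.orthogonal W).toRepresentation.IsVirtuallyCommutative) :
    ρ.IsVirtuallyCommutative := by
  have key : ∀ U : Subrepresentation ρ, ∀ {a b : G},
      Commute (U.toRepresentation a) (U.toRepresentation b) →
      ∀ v ∈ U.toSubmodule, ρ a (ρ b v) = ρ b (ρ a v) :=
    fun U _ _ h v hv => congr_arg Subtype.val (LinearMap.congr_fun h.eq ⟨v, hv⟩)
  obtain ⟨A₁, hA₁, hA₁c⟩ := h₁
  obtain ⟨A₂, hA₂, hA₂c⟩ := h₂
  refine ⟨A₁ ⊓ A₂, inferInstance, fun a ha b hb => ?_⟩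
  ext x
  obtain ⟨y, hy, z, hz, rfl⟩ := W.toSubmodule.exists_add_mem_mem_orthogonal x
  simp only [Module.End.mul_apply, map_add, key W (hA₁c a ha.1 b hb.1) y hy,
    key _ (hA₂c a ha.2 b hb.2) z hz]

end Unitary

theorem IsUnitary.isVirtuallyCommutative {G V : Type*} [Group G] [NormedAddCommGroup V]
    [InnerProductSpace ℂ V] [FiniteDimensional ℂ V] {ρ : Representation ℂ G V}
    (hρ : ρ.IsUnitary) (c : ℕ) (hc : ∀ g ∈ (⊤ : Subgroup G).lowerCentralSeries c, ρ g = 1) :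
    ρ.IsVirtuallyCommutative := by
  induction hd : Module.finrank ℂ V using Nat.strong_induction_on generalizing V G c with
  | _ d ihd =>
  induction c generalizing G with
  | zero =>
    exact ⟨⊤, inferInstance, fun a _ b _ => by
      rw [hc a (Subgroup.mem_top a), hc b (Subgroup.mem_top b)]
      exact Commute.refl 1⟩
  | succ c ihc =>
    by_cases hscalar : ∀ z ∈ (⊤ : Subgroup G).lowerCentralSeries c, ∃ μ : ℂ,
        ρ z = algebraMap ℂ _ μ
    · cases c with
      | zero =>
        refine ⟨⊤, inferInstance, fun a _ b _ => ?_⟩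
        obtain ⟨μ, hμ⟩ := hscalar a (Subgroup.mem_top a)
        rw [hμ]
        exact Algebra.commute_algebraMap_left μ _
      | succ c =>
        obtain ⟨A, hA, hAc⟩ := ρ.exists_finiteIndex_lowerCentralSeries_succ_le_ker c
          fun g u hu => hscalar _ <| by
            rw [← commutatorElement_inv]
            exact inv_mem (Subgroup.commutator_mem_commutator hu (Subgroup.mem_top g))
        exact .of_comp_subtype hA (ihc (hρ.comp A.subtype) hAc)
    · push Not at hscalar
      obtain ⟨z, hz, hns⟩ := hscalar
      have hcentral : ∀ g, Commute (ρ z) (ρ g) := fun g =>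
        (ρ.apply_commutatorElement_eq_one_iff z g).mp <|
          hc _ (Subgroup.commutator_mem_commutator hz (Subgroup.mem_top g))
      obtain ⟨W, hW_ne_bot, hW_ne_top⟩ := ρ.exists_subrepresentation_ne_bot_ne_top hcentral hns
      refine hρ.isVirtuallyCommutative_of_restrict W ?_ ?_
      · exact ihd _ (hd ▸ Submodule.finrank_lt hW_ne_top) (hρ.restrict W) (c + 1)
          (fun g hg => W.toRepresentation_eq_one (hc g hg)) rfl
      · exact ihd _ (hd ▸ Submodule.finrank_lt (mt (Submodule.orthogonal_eq_top_iff _).mp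
          hW_ne_bot)) (hρ.restrict _) (c + 1)
          (fun g hg => (hρ.orthogonal W).toRepresentation_eq_one (hc g hg)) rfl

end Representation

section Complexification

variable (n : Type*) [Fintype n] [DecidableEq n]

noncomputable def Matrix.ofRealStarMonoidHom : Matrix n n ℝ →⋆* Matrix n n ℂ where
  toMonoidHom := (algebraMap ℝ ℂ).mapMatrix.toMonoidHom
  map_star' M :=
    Matrix.conjTranspose_map (A := M) Complex.ofReal fun x => (Complex.conj_ofReal x).symm

-- `O(n) ≃ unitary (ℝⁿ →L ℝⁿ) ≃ O_n(ℝ) ↪ U_n(ℂ) ≃ unitary (ℂⁿ →L ℂⁿ)`, through matrices.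
noncomputable def unitaryComplexification :
    (EuclideanSpace ℝ n ≃ₗᵢ[ℝ] EuclideanSpace ℝ n) →*
      unitary (EuclideanSpace ℂ n →L[ℂ] EuclideanSpace ℂ n) :=
  (Unitary.map (.ofClass (Matrix.toEuclideanCLM (n := n) (𝕜 := ℂ)).toStarAlgHom)).toMonoidHom.comp
    <| (Unitary.map (Matrix.ofRealStarMonoidHom n)).toMonoidHom.comp
    <| (Unitary.map (.ofClass (Matrix.toEuclideanCLM (n := n) (𝕜 := ℝ)).symm.toStarAlgHom)
      ).toMonoidHom.comp Unitary.linearIsometryEquiv.symm.toMonoidHom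

lemma unitaryComplexification_injective : Function.Injective (unitaryComplexification n) := by
  refine (Unitary.map_injective ?_).comp <| (Unitary.map_injective ?_).comp <|
    (Unitary.map_injective ?_).comp Unitary.linearIsometryEquiv.symm.injective
  · exact (Matrix.toEuclideanCLM (n := n) (𝕜 := ℂ)).injective
  · exact Matrix.map_injective Complex.ofReal_injective
  · exact (Matrix.toEuclideanCLM (n := n) (𝕜 := ℝ)).symm.injective

noncomputable def complexification :
    Representation ℂ (EuclideanSpace ℝ n ≃ₗᵢ[ℝ] EuclideanSpace ℝ n) (EuclideanSpace ℂ n) :=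
  ContinuousLinearMap.toLinearMapRingHom.toMonoidHom.comp <|
    (unitary _).subtype.comp (unitaryComplexification n)

lemma complexification_injective : Function.Injective (complexification n) :=
  ContinuousLinearMap.coe_injective.comp <| Subtype.val_injective.comp <|
    unitaryComplexification_injective n

lemma isUnitary_complexification : (complexification n).IsUnitary :=
  fun g => Unitary.inner_map_map (unitaryComplexification n g)

end Complexification

/-- Every nilpotent subgroup of `Isom(ℝᵏ)` is virtually abelian: it contains an abelian
subgroup of finite index. -/
theorem stmt_5 (k : ℕ)
    (Γ : Subgroup (EuclideanSpace ℝ (Fin k) ≃ᵢ EuclideanSpace ℝ (Fin k)))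
    (hΓ : Group.IsNilpotent Γ) :
    ∃ A : Subgroup Γ, A.FiniteIndex ∧ ∀ a ∈ A, ∀ b ∈ A, a * b = b * a := by
  obtain ⟨n, hn⟩ := Subgroup.nilpotent_iff_lowerCentralSeries.mp hΓ
  obtain ⟨A, hA, hAc⟩ := ((isUnitary_complexification (Fin k)).comp
      (IsometryEquiv.linearPart.comp Γ.subtype)).isVirtuallyCommutative n fun g hg => by
    rw [hn, Subgroup.mem_bot] at hg
    rw [hg, map_one]
  refine ⟨A, hA, fun a ha b hb => Subtype.ext ?_⟩
  exact IsometryEquiv.commute_of_isNilpotent (Γ.subtype.comp A.subtype)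
    (fun x y => (hAc x x.2 y y.2).of_map (complexification_injective (Fin k))) ⟨a, ha⟩ ⟨b, hb⟩
end

section
/- Let X be a metric space in which every pair of points is joined by a minimizing geodesic, let Γ be a group acting on X by isometries, and let x̃ ∈ X be a point such that the orbit map γ ↦ γ·x̃ is injective. Define the left-invariant metric ρ on Γ by ρ(γ₁, γ₂) = d(γ₁·x̃, γ₂·x̃). Suppose there is a function D : (0,∞) → (0,∞) with D(R)/R → 0 as R → ∞ such that for every γ ∈ Γ with γ ≠ e there exists a minimizing geodesic c from x̃ to γ·x̃ every point of which lies within distance D(ρ(e,γ)) of the orbit Γ·x̃. Then (Γ, ρ) is weakly asymptotically geodesic. -/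
private lemma tele_prod {Γ : Type*} [Group Γ] (B : ℕ → Γ) :
    ∀ n, ((List.range n).map (fun j => (B j)⁻¹ * B (j+1))).prod = (B 0)⁻¹ * B n := by
  intro n
  induction n with
  | zero => simp
  | succ n ih =>
      rw [List.range_succ, List.map_append, List.prod_append]
      simp [ih, mul_assoc]

/-- If `Γ` acts by isometries on a geodesic metric space `X` with free orbit `Γ · x̃`, and the
minimal geodesics from `x̃` to `γ · x̃` stay within distance `D(ρ(e,γ))` of the orbit, where
`D(R)/R → 0`, then `(Γ, ρ)` is weakly asymptotically geodesic, where
`ρ(γ₁,γ₂) = d(γ₁ · x̃, γ₂ · x̃)`. -/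
theorem stmt_7 {X : Type*} [MetricSpace X]
    (hgeod : ∀ p q : X, ∃ c : ℝ → X, IsMinGeodesic c p q)
    {Γ : Type*} [Group Γ] [MulAction Γ X]
    (hiso : ∀ γ : Γ, Isometry (fun p : X => γ • p))
    (x : X) (hinj : Function.Injective (fun γ : Γ => γ • x))
    (D : ℝ → ℝ) (hDpos : ∀ R > 0, 0 < D R)
    (hDsub : Filter.Tendsto (fun R => D R / R) Filter.atTop (nhds 0))
    (hmin : ∀ γ : Γ, γ ≠ 1 → ∃ c : ℝ → X, IsMinGeodesic c x (γ • x) ∧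
      ∀ t ∈ Set.Icc (0 : ℝ) (dist x (γ • x)),
        Metric.infDist (c t) (MulAction.orbit Γ x) ≤ D (dist x (γ • x))) :
    ∃ s : ℝ → ℝ → ℝ,
      (∀ ε > (0 : ℝ), Filter.Tendsto (fun R => R / s ε R) Filter.atTop Filter.atTop) ∧
      (∀ ε > (0 : ℝ), ∀ γ : Γ, 0 < dist x (γ • x) →
        ∃ L : List Γ, L.prod = γ ∧
          (L.map fun g => dist x (g • x)).sum ≤ (1 + ε) * dist x (γ • x) ∧
          ∀ g ∈ L, dist x (g • x) ≤ s ε (dist x (γ • x))) := by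
  classical
  refine ⟨fun ε R => (8/ε + 4) * D R + 1, ?_, ?_⟩
  · -- sublinearity
    intro ε hε
    have h0 : Filter.Tendsto (fun R : ℝ => (8/ε + 4) * (D R / R) + R⁻¹)
        Filter.atTop (nhds 0) := by
      have h := (hDsub.const_mul (8/ε+4)).add tendsto_inv_atTop_zero
      simpa using h
    have h1 : Filter.Tendsto (fun R : ℝ => ((8/ε + 4) * D R + 1) / R)
        Filter.atTop (nhds 0) := by
      refine h0.congr (fun R => ?_)
      rw [add_div, mul_div_assoc, one_div]
    have h2 : Filter.Tendsto (fun R : ℝ => ((8/ε + 4) * D R + 1) / R)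
        Filter.atTop (nhdsWithin 0 (Set.Ioi 0)) := by
      refine tendsto_nhdsWithin_of_tendsto_nhds_of_eventually_within _ h1 ?_
      filter_upwards [Filter.eventually_gt_atTop 0] with R hR
      have hDR := hDpos R hR
      have hc : (0:ℝ) < 8/ε + 4 := by positivity
      exact div_pos (by nlinarith) hR
    have h3 := h2.inv_tendsto_nhdsGT_zero
    refine h3.congr (fun R => ?_)
    rw [Pi.inv_apply, inv_div]
  · intro ε hε γ hR0
    have hγ1 : γ ≠ 1 := by
      rintro rfl
      simp at hR0
    set R := dist x (γ • x) with hRdef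
    have hDR : 0 < D R := hDpos R hR0
    by_cases hcase : ε * R ≤ 8 * D R
    · -- short case: the single word [γ]
      refine ⟨[γ], by simp, ?_, ?_⟩
      · simp only [List.map_cons, List.map_nil, List.sum_cons, List.sum_nil, add_zero]
        nlinarith
      · intro g hg
        simp only [List.mem_singleton] at hg
        subst hg
        have hRle : R ≤ 8 * D R / ε := by
          rw [le_div_iff₀ hε]
          nlinarith
        have heq0 : (8/ε + 4) * D R = 8 * D R / ε + 4 * D R := by ring
        show R ≤ (8/ε + 4) * D R + 1
        rw [heq0]
        nlinarith
    · push_neg at hcase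
      obtain ⟨c, hc, hnear⟩ := hmin γ hγ1
      obtain ⟨hc0, hcR, hcd⟩ := hc
      rw [← hRdef] at hcR hcd hnear
      set a := ε * R / (8 * D R) with ha
      have h8 : (0:ℝ) < 8 * D R := by linarith
      have ha1 : 1 < a := (one_lt_div h8).mpr hcase
      set N := ⌈a⌉₊ with hNdef
      have hN0 : 0 < N := Nat.ceil_pos.mpr (by linarith)
      have hNa : a ≤ (N:ℝ) := Nat.le_ceil a
      have hN2a : (N:ℝ) ≤ 2 * a := by
        have := Nat.ceil_lt_add_one (le_of_lt (lt_trans zero_lt_one ha1))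
        rw [← hNdef] at this
        linarith
      have hNR : (0:ℝ) < (N:ℝ) := by exact_mod_cast hN0
      have ht_mem : ∀ j : ℕ, j ≤ N → ((j:ℝ) * R / N : ℝ) ∈ Set.Icc (0:ℝ) R := by
        intro j hj
        constructor
        · positivity
        · rw [div_le_iff₀ hNR]
          have hjN : (j:ℝ) ≤ (N:ℝ) := by exact_mod_cast hj
          nlinarith
      have hpt : ∀ j : ℕ, ∃ g : Γ,
          (0 < j → j < N → dist (c ((j:ℝ) * R / N)) (g • x) ≤ 2 * D R) := by
        intro j
        by_cases hj : 0 < j ∧ j < N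
        · have hmem := ht_mem j (le_of_lt hj.2)
          have hlt : Metric.infDist (c ((j:ℝ)*R/N)) (MulAction.orbit Γ x) < 2 * D R :=
            lt_of_le_of_lt (hnear _ hmem) (by linarith)
          have hne : (MulAction.orbit Γ x).Nonempty := ⟨x, MulAction.mem_orbit_self x⟩
          obtain ⟨y, hy, hyd⟩ := (Metric.infDist_lt_iff hne).mp hlt
          rw [MulAction.mem_orbit_iff] at hy
          obtain ⟨g, rfl⟩ := hy
          exact ⟨g, fun _ _ => le_of_lt hyd⟩
        · exact ⟨1, fun h1 h2 => absurd ⟨h1, h2⟩ hj⟩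
      choose B' hB' using hpt
      set B : ℕ → Γ := fun j => if j = 0 then 1 else if j = N then γ else B' j with hBdef
      have hB0 : B 0 = 1 := by simp [hBdef]
      have hBN : B N = γ := by simp [hBdef, hN0.ne']
      have hBdist : ∀ j ≤ N, dist (c ((j:ℝ) * R / N)) (B j • x) ≤ 2 * D R := by
        intro j hj
        rcases Nat.eq_zero_or_pos j with rfl | hj0
        · have h00 : ((0:ℕ):ℝ) * R / N = 0 := by simp
          rw [h00, hc0, hB0, one_smul, dist_self]
          linarith
        rcases eq_or_lt_of_le hj with hjeq | hjN
        · rw [hjeq, hBN]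
          have hNN : ((N:ℕ):ℝ) * R / ((N:ℕ):ℝ) = R := by
            field_simp
          rw [hNN, hcR, dist_self]
          linarith
        · have := hB' j hj0 hjN
          have hBj : B j = B' j := by
            simp [hBdef, hj0.ne', (ne_of_lt hjN)]
          rw [hBj]
          exact this
      have hpiece : ∀ j < N, dist x (((B j)⁻¹ * B (j+1)) • x) ≤ R / N + 4 * D R := by
        intro j hj
        have e1 : dist x (((B j)⁻¹ * B (j+1)) • x) = dist (B j • x) (B (j+1) • x) := by
          have h := (hiso (B j)).dist_eq x (((B j)⁻¹ * B (j+1)) • x)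
          simp only [smul_smul, mul_inv_cancel_left] at h
          exact h.symm
        rw [e1]
        have hj1 : j + 1 ≤ N := hj
        have hd1 := hBdist j (le_of_lt hj)
        have hd2 := hBdist (j+1) hj1
        have hcc : dist (c ((j:ℝ)*R/N)) (c (((j:ℕ)+1:ℕ)*R/N)) = R / N := by
          rw [hcd _ (ht_mem j hj.le) _ (ht_mem (j+1) hj1)]
          push_cast
          have he : (j:ℝ)*R/N - ((j:ℝ)+1)*R/N = -(R/N) := by ring
          rw [he, abs_neg, abs_of_nonneg (by positivity)]
        calc dist (B j • x) (B (j+1) • x)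
            ≤ dist (B j • x) (c ((j:ℝ)*R/N)) + dist (c ((j:ℝ)*R/N)) (c (((j:ℕ)+1:ℕ)*R/N))
              + dist (c (((j:ℕ)+1:ℕ)*R/N)) (B (j+1) • x) := dist_triangle4 _ _ _ _
          _ ≤ 2 * D R + R/N + 2 * D R := by
              rw [dist_comm] at hd1
              rw [hcc]
              push_cast at hd2 ⊢
              gcongr
          _ = R/N + 4 * D R := by ring
      refine ⟨(List.range N).map (fun j => (B j)⁻¹ * B (j+1)), ?_, ?_, ?_⟩
      · rw [tele_prod]
        simp [hB0, hBN]
      · rw [List.map_map]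
        have hbd : ∀ y ∈ (List.range N).map
            ((fun g => dist x (g • x)) ∘ fun j => (B j)⁻¹ * B (j+1)),
            y ≤ R / N + 4 * D R := by
          intro y hy
          simp only [List.mem_map, List.mem_range, Function.comp] at hy
          obtain ⟨j, hj, rfl⟩ := hy
          exact hpiece j hj
        have hsum := List.sum_le_card_nsmul _ _ hbd
        simp only [List.length_map, List.length_range, nsmul_eq_mul] at hsum
        refine le_trans hsum ?_
        have hNRN : (N:ℝ) * (R / N) = R := by field_simp
        have haR : a * (8 * D R) = ε * R := div_mul_cancel₀ _ h8.ne'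
        nlinarith [mul_le_mul_of_nonneg_right hN2a hDR.le]
      · intro g hg
        simp only [List.mem_map, List.mem_range] at hg
        obtain ⟨j, hj, rfl⟩ := hg
        have hp := hpiece j hj
        have hRN : R / N ≤ 8 * D R / ε := by
          rw [div_le_div_iff₀ hNR hε]
          have haR : a * (8 * D R) = ε * R := div_mul_cancel₀ _ h8.ne'
          nlinarith
        have heq : (8/ε + 4) * D R = 8 * D R / ε + 4 * D R := by ring
        show dist x (((B j)⁻¹ * B (j+1)) • x) ≤ (8/ε + 4) * D R + 1
        rw [heq]
        linarith
end

section
/- Let X be a metric space in which every pair of points is joined by a minimizing geodesic, let Γ be a group acting on X by isometries, and let x̃ ∈ X be a point such that the orbit map γ ↦ γ·x̃ is injective. Define the left-invariant metric ρ on Γ by ρ(γ₁, γ₂) = d(γ₁·x̃, γ₂·x̃). Suppose there is a constant R₀ > 0 such that for every γ ∈ Γ with γ ≠ e there exists a minimizing geodesic c from x̃ to γ·x̃ every point of which lies within distance R₀ of the orbit Γ·x̃. Then (Γ, ρ) is asymptotically geodesic. -/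
private lemma prod_range_telescope {Γ : Type*} [Group Γ] (β : ℕ → Γ) (n : ℕ) :
    ((List.range n).map (fun i => (β i)⁻¹ * β (i+1))).prod = (β 0)⁻¹ * β n := by
  induction n with
  | zero => simp
  | succ n ih =>
      rw [List.range_succ, List.map_append, List.prod_append, ih]
      simp [mul_assoc]



/-- If `Γ` acts by isometries on a geodesic metric space `X` with free orbit `Γ · x̃`, and the
minimal geodesics from `x̃` to `γ · x̃` stay within a bounded distance `R₀` of the orbit, then
`(Γ, ρ)` is asymptotically geodesic, where `ρ(γ₁,γ₂) = d(γ₁ · x̃, γ₂ · x̃)`. -/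
theorem stmt_8 {X : Type*} [MetricSpace X]
    (hgeod : ∀ p q : X, ∃ c : ℝ → X, IsMinGeodesic c p q)
    {Γ : Type*} [Group Γ] [MulAction Γ X]
    (hiso : ∀ γ : Γ, Isometry (fun p : X => γ • p))
    (x : X) (hinj : Function.Injective (fun γ : Γ => γ • x))
    (R₀ : ℝ) (hR₀ : 0 < R₀)
    (hmin : ∀ γ : Γ, γ ≠ 1 → ∃ c : ℝ → X, IsMinGeodesic c x (γ • x) ∧
      ∀ t ∈ Set.Icc (0 : ℝ) (dist x (γ • x)),
        Metric.infDist (c t) (MulAction.orbit Γ x) ≤ R₀) :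
    ∀ ε > (0 : ℝ), ∃ s > (0 : ℝ), ∀ γ : Γ,
      ∃ L : List Γ, L.prod = γ ∧
        (L.map fun g => dist x (g • x)).sum ≤ (1 + ε) * dist x (γ • x) ∧
        ∀ g ∈ L, dist x (g • x) ≤ s := by
  intro ε hε
  set R₁ : ℝ := R₀ + 1 with hR₁def
  have hR₁ : 0 < R₁ := by positivity
  refine ⟨4 * R₁ / ε + 2 * R₁, by positivity, fun γ => ?_⟩
  set s : ℝ := 4 * R₁ / ε + 2 * R₁ with hsdef
  set d : ℝ := dist x (γ • x) with hddef
  have hd0 : 0 ≤ d := dist_nonneg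
  by_cases hshort : d ≤ s
  · refine ⟨[γ], by simp, ?_, ?_⟩
    · simp only [List.map_cons, List.map_nil, List.sum_cons, List.sum_nil, add_zero]
      nlinarith
    · intro g hg
      simp only [List.mem_singleton] at hg
      subst hg
      exact hshort
  push_neg at hshort
  have hdpos : 0 < d := lt_trans (by positivity) hshort
  have hγ : γ ≠ 1 := by
    intro h
    rw [hddef, h, one_smul, dist_self] at hdpos
    exact lt_irrefl _ hdpos
  obtain ⟨c, hc, hnear⟩ := hmin γ hγ
  -- number of pieces
  set N : ℕ := ⌈d * ε / (4 * R₁)⌉₊ with hNdef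
  have hquotpos : 0 < d * ε / (4 * R₁) := by positivity
  have hN1 : 1 ≤ N := Nat.one_le_ceil_iff.mpr hquotpos
  have hNpos : (0:ℝ) < N := by exact_mod_cast hN1
  have hNge : d * ε / (4 * R₁) ≤ N := Nat.le_ceil _
  have hNle : (N:ℝ) ≤ d * ε / (4 * R₁) + 1 := (Nat.ceil_lt_add_one hquotpos.le).le
  -- key estimate: εd > 4R₁
  have hεd : 4 * R₁ < ε * d := by
    have : 4 * R₁ / ε < d := lt_of_le_of_lt (by nlinarith) hshort
    calc 4 * R₁ = ε * (4 * R₁ / ε) := by field_simp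
    _ < ε * d := by exact mul_lt_mul_of_pos_left this hε
  -- d/N ≤ 4R₁/ε
  have hdN : d / N ≤ 4 * R₁ / ε := by
    rw [div_le_div_iff₀ hNpos hε]
    calc d * ε = (d * ε / (4 * R₁)) * (4 * R₁) := by field_simp
    _ ≤ N * (4 * R₁) := by nlinarith
    _ = 4 * R₁ * N := by ring
  -- points in Icc
  have ht_mem : ∀ i : ℕ, i ≤ N → (↑i * d / ↑N) ∈ Set.Icc (0:ℝ) d := by
    intro i hi
    constructor
    · positivity
    · rw [div_le_iff₀ hNpos]
      have : (i:ℝ) ≤ N := by exact_mod_cast hi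
      nlinarith
  -- choose orbit approximants
  have hβex : ∀ i : ℕ, ∃ g : Γ, (i = 0 → g = 1) ∧ (i = N → g = γ) ∧
      (i ≤ N → dist (c (↑i * d / ↑N)) (g • x) ≤ R₁) := by
    intro i
    rcases eq_or_ne i 0 with h0 | h0
    · refine ⟨1, fun _ => rfl, fun hN' => absurd (hN'.symm.trans h0) (by omega), ?_⟩
      intro _
      subst h0
      simp only [Nat.cast_zero, zero_mul, zero_div, hc.1, one_smul, dist_self]
      exact hR₁.le
    rcases eq_or_ne i N with hN' | hN'
    · refine ⟨γ, fun h => absurd h h0, fun _ => rfl, ?_⟩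
      intro _
      have hNne : (N:ℝ) ≠ 0 := hNpos.ne'
      have hNd : (↑N:ℝ) * d / ↑N = d := by field_simp
      rw [hN', hNd, hddef, hc.2.1, dist_self]
      exact hR₁.le
    · by_cases hi : i ≤ N
      · have h1 : Metric.infDist (c (↑i * d / ↑N)) (MulAction.orbit Γ x) ≤ R₀ :=
          hnear _ (ht_mem i hi)
        have h2 : Metric.infDist (c (↑i * d / ↑N)) (MulAction.orbit Γ x) < R₁ := by
          rw [hR₁def]; linarith
        have hne : (MulAction.orbit Γ x).Nonempty := ⟨x, MulAction.mem_orbit_self x⟩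
        rw [Metric.infDist_lt_iff hne] at h2
        obtain ⟨y, hy, hyd⟩ := h2
        obtain ⟨g, rfl⟩ := hy
        exact ⟨g, fun h => absurd h h0, fun h => absurd h hN', fun _ => hyd.le⟩
      · exact ⟨1, fun h => absurd h h0, fun h => absurd h hN', fun h => absurd h hi⟩
  choose β hβ0 hβN hβd using hβex
  -- bound each letter
  have hlen : ∀ i : ℕ, i < N → dist x (((β i)⁻¹ * β (i+1)) • x) ≤ d / N + 2 * R₁ := by
    intro i hi
    have hdist_eq : dist x (((β i)⁻¹ * β (i+1)) • x) = dist (β i • x) (β (i+1) • x) := by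
      have := (hiso (β i)).dist_eq x (((β i)⁻¹ * β (i+1)) • x)
      simp only [smul_smul, mul_inv_cancel_left] at this
      exact this.symm
    rw [hdist_eq]
    have hseg : dist (c (↑i * d / ↑N)) (c (↑(i+1) * d / ↑N)) = d / N := by
      rw [hc.2.2 _ (ht_mem i hi.le) _ (ht_mem (i+1) hi)]
      push_cast
      rw [abs_of_nonpos (by rw [sub_nonpos]; gcongr; linarith)]
      field_simp
      ring
    have h1 := hβd i hi.le
    have h2 := hβd (i+1) hi
    calc dist (β i • x) (β (i+1) • x)
        ≤ dist (β i • x) (c (↑i * d / ↑N)) + dist (c (↑i * d / ↑N)) (c (↑(i+1) * d / ↑N))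
          + dist (c (↑(i+1) * d / ↑N)) (β (i+1) • x) := dist_triangle4 _ _ _ _
      _ ≤ R₁ + d / N + R₁ := by rw [hseg, dist_comm (β i • x)]; gcongr
      _ = d / N + 2 * R₁ := by ring
  -- the word
  refine ⟨(List.range N).map (fun i => (β i)⁻¹ * β (i+1)), ?_, ?_, ?_⟩
  · rw [prod_range_telescope, hβ0 0 rfl, hβN N rfl, inv_one, one_mul]
  · -- sum bound
    rw [List.map_map]
    have hb : ∀ r ∈ (List.range N).map
        ((fun g => dist x (g • x)) ∘ fun i => (β i)⁻¹ * β (i+1)),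
        r ≤ d / N + 2 * R₁ := by
      intro r hr
      rw [List.mem_map] at hr
      obtain ⟨i, hi, rfl⟩ := hr
      exact hlen i (List.mem_range.mp hi)
    have hsum := List.sum_le_card_nsmul _ _ hb
    simp only [List.length_map, List.length_range, nsmul_eq_mul] at hsum
    refine hsum.trans ?_
    have hNdN : (N:ℝ) * (d / N) = d := by field_simp
    have heq : (N:ℝ) * (d / N + 2 * R₁) = d + 2 * R₁ * N := by rw [mul_add, hNdN]; ring
    rw [heq]
    have h3 : 2 * R₁ * (N:ℝ) ≤ 2 * R₁ * (d * ε / (4 * R₁) + 1) := by nlinarith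
    have h4 : 2 * R₁ * (d * ε / (4 * R₁) + 1) = ε * d / 2 + 2 * R₁ := by field_simp; ring
    nlinarith
  · -- letter bound
    intro g hg
    rw [List.mem_map] at hg
    obtain ⟨i, hi, rfl⟩ := hg
    refine (hlen i (List.mem_range.mp hi)).trans ?_
    rw [hsdef]
    gcongr
end

section
/- Let Z be a proper metric space that contains no line, let k ≥ 0, and equip X = ℝ^k × Z with the ℓ²-product metric (ℝ^k carrying the standard Euclidean metric). Let Γ be a group acting on X by isometries that preserve the product splitting, so that each γ ∈ Γ acts as γ·(v, w) = (γ₁·v, γ₂·w) with γ₁ ∈ Isom(ℝ^k) and γ₂ ∈ Isom(Z). Fix z ∈ Z and set x̃ = (0, z). Suppose there is R > 0 such that for every γ ∈ Γ there exists a minimizing geodesic from x̃ to γ·x̃ every point of which lies within distance R of the orbit Γ·x̃. Then the set { γ₂·z : γ ∈ Γ } is bounded in Z. -/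
open Filter Metric Set Topology

/-- `(A, B)` and `(A', B')` have norms `t` and `s`, while `(M, L)`, bounded by their sum, has norm
`t + s`: equality in Minkowski's inequality makes the two vectors proportional. -/
theorem mul_add_eq_of_minkowski_eq {A B A' B' M L t s : ℝ}
    (hB : 0 ≤ B) (hB' : 0 ≤ B') (hM : 0 ≤ M) (hL : 0 ≤ L) (ht : 0 ≤ t) (hs : 0 ≤ s)
    (h₁ : A ^ 2 + B ^ 2 = t ^ 2) (h₂ : A' ^ 2 + B' ^ 2 = s ^ 2)
    (h₃ : M ^ 2 + L ^ 2 = (t + s) ^ 2)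
    (hMA : M ≤ A + A') (hLB : L ≤ B + B') :
    B * (t + s) = L * t := by
  have hcs : A * A' + B * B' ≤ t * s := by -- Cauchy–Schwarz
    nlinarith [sq_nonneg (A * B' - A' * B), mul_nonneg ht hs]
  have hM2 : M ^ 2 ≤ (A + A') ^ 2 := pow_le_pow_left₀ hM hMA 2
  have hL2 : L ^ 2 ≤ (B + B') ^ 2 := pow_le_pow_left₀ hL hLB 2
  have hinner : A * A' + B * B' = t * s := by nlinarith
  have hLeq : L = B + B' := by
    refine le_antisymm hLB ((pow_le_pow_iff_left₀ (by positivity) hL two_ne_zero).mp ?_)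
    nlinarith
  have hcross : A * B' = A' * B := by
    have : (A * B' - A' * B) ^ 2 = 0 := by
      linear_combination
        (A' ^ 2 + B' ^ 2) * h₁ + t ^ 2 * h₂ - (A * A' + B * B' + t * s) * hinner
    linarith [pow_eq_zero_iff (n := 2) two_ne_zero |>.mp this]
  have hprop : B * s = B' * t := by
    refine (sq_eq_sq₀ (mul_nonneg hB hs) (mul_nonneg hB' ht)).mp ?_
    linear_combination B' ^ 2 * h₁ - B ^ 2 * h₂ - (A * B' + A' * B) * hcross
  linear_combination hprop - t * hLeq

namespace WithLp

variable {α β : Type*} [PseudoMetricSpace α] [PseudoMetricSpace β]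

theorem prod_dist_sq_eq_of_L2 (x y : WithLp 2 (α × β)) :
    dist x y ^ 2 = dist x.fst y.fst ^ 2 + dist x.snd y.snd ^ 2 := by
  rw [prod_dist_eq_add (by norm_num), ENNReal.toReal_ofNat, ← Real.sqrt_eq_rpow]
  norm_cast
  exact Real.sq_sqrt (by positivity)

theorem dist_snd_mul_eq_of_dist_add_dist_eq {x y w : WithLp 2 (α × β)}
    (h : dist x y + dist y w = dist x w) :
    dist x.snd y.snd * dist x w = dist x.snd w.snd * dist x y := by
  rw [← h]
  refine mul_add_eq_of_minkowski_eq dist_nonneg dist_nonneg dist_nonneg dist_nonneg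
    dist_nonneg dist_nonneg (prod_dist_sq_eq_of_L2 x y).symm (prod_dist_sq_eq_of_L2 y w).symm
    ?_ (dist_triangle _ _ _) (dist_triangle _ _ _)
  rw [h, prod_dist_sq_eq_of_L2]

theorem dist_snd_mul_eq_of_dist_add_dist_eq' {x y w : WithLp 2 (α × β)}
    (h : dist x y + dist y w = dist x w) :
    dist y.snd w.snd * dist x w = dist x.snd w.snd * dist y w := by
  have := dist_snd_mul_eq_of_dist_add_dist_eq (x := w) (y := y) (w := x)
    (by rw [dist_comm w y, dist_comm y x, dist_comm w x, add_comm, h])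
  rwa [dist_comm w.snd, dist_comm w.snd, dist_comm w x, dist_comm w y] at this

end WithLp

namespace IsMinGeodesic

variable {α β : Type*} [MetricSpace α] [MetricSpace β] {c : ℝ → WithLp 2 (α × β)}
  {p q : WithLp 2 (α × β)}

theorem dist_eq_sub (hc : IsMinGeodesic c p q) {s t : ℝ} (hs : s ∈ Icc 0 (dist p q))
    (ht : t ∈ Icc 0 (dist p q)) (hst : s ≤ t) : dist (c s) (c t) = t - s := by
  rw [hc.2.2 s hs t ht, abs_sub_comm, abs_of_nonneg (sub_nonneg.2 hst)]

theorem dist_add_dist_eq (hc : IsMinGeodesic c p q) {r s t : ℝ} (hr : r ∈ Icc 0 (dist p q))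
    (hs : s ∈ Icc 0 (dist p q)) (ht : t ∈ Icc 0 (dist p q)) (hrs : r ≤ s) (hst : s ≤ t) :
    dist (c r) (c s) + dist (c s) (c t) = dist (c r) (c t) := by
  rw [hc.dist_eq_sub hr hs hrs, hc.dist_eq_sub hs ht hst, hc.dist_eq_sub hr ht (hrs.trans hst)]
  ring

theorem dist_snd_mul_eq (hc : IsMinGeodesic c p q) {s t : ℝ}
    (hs : s ∈ Icc 0 (dist p q)) (ht : t ∈ Icc 0 (dist p q)) :
    dist (c s).snd (c t).snd * dist p q = dist p.snd q.snd * |s - t| := by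
  wlog hst : s ≤ t generalizing s t
  · rw [dist_comm, abs_sub_comm]
    exact this ht hs (le_of_not_ge hst)
  rw [abs_sub_comm, abs_of_nonneg (sub_nonneg.2 hst)]
  have h0 : (0 : ℝ) ∈ Icc 0 (dist p q) := ⟨le_rfl, dist_nonneg⟩
  have hD : dist p q ∈ Icc 0 (dist p q) := ⟨dist_nonneg, le_rfl⟩
  have h₁ := WithLp.dist_snd_mul_eq_of_dist_add_dist_eq
    (hc.dist_add_dist_eq h0 ht hD ht.1 ht.2)
  have h₂ := WithLp.dist_snd_mul_eq_of_dist_add_dist_eq'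
    (hc.dist_add_dist_eq h0 hs ht hs.1 hst)
  rw [hc.dist_eq_sub h0 hD hD.1, hc.dist_eq_sub h0 ht ht.1, hc.1, hc.2.1, sub_zero,
    sub_zero] at h₁
  rw [hc.dist_eq_sub h0 ht ht.1, hc.dist_eq_sub hs ht hst, hc.1, sub_zero] at h₂
  rcases ht.1.eq_or_lt with rfl | htpos
  · obtain rfl : s = 0 := le_antisymm hst hs.1
    simp
  refine mul_right_cancel₀ htpos.ne' ?_
  linear_combination dist p q * h₂ + (t - s) * h₁

theorem dist_snd_rescale (hc : IsMinGeodesic c p q) (hL : 0 < dist p.snd q.snd)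
    {s t : ℝ}
    (hs : |s| ≤ dist p.snd q.snd / 2) (ht : |t| ≤ dist p.snd q.snd / 2) :
    dist (c (dist p q / 2 + dist p q / dist p.snd q.snd * s)).snd
      (c (dist p q / 2 + dist p q / dist p.snd q.snd * t)).snd = |s - t| := by
  set L := dist p.snd q.snd with hL_def
  set D := dist p q
  have hD : 0 < D := hL.trans_le (WithLp.dist_snd_le p q)
  have hmem : ∀ u, |u| ≤ L / 2 → D / 2 + D / L * u ∈ Icc 0 D := by
    intro u hu
    have : |D / L * u| ≤ D / 2 := by
      rw [abs_mul, abs_of_pos (div_pos hD hL), div_mul_eq_mul_div, div_le_iff₀ hL]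
      nlinarith
    constructor <;> linarith [abs_le.1 this]
  refine mul_right_cancel₀ hD.ne' ?_
  rw [hc.dist_snd_mul_eq (hmem s hs) (hmem t ht), ← hL_def, add_sub_add_left_eq_sub, ← mul_sub,
    abs_mul, abs_of_pos (div_pos hD hL)]
  field_simp

end IsMinGeodesic

theorem exists_isometry_of_eventually_dist_eq_s9 {ι X Z : Type*} [PseudoMetricSpace X]
    [MetricSpace Z] [ProperSpace Z] {l : Filter ι} [l.NeBot] (f : ι → X → Z) (x₀ : X) (z : Z)
    (r : ℝ) (h₀ : ∀ᶠ i in l, dist (f i x₀) z ≤ r)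
    (hf : ∀ x y, ∀ᶠ i in l, dist (f i x) (f i y) = dist x y) :
    ∃ g : X → Z, Isometry g := by
  let U := Ultrafilter.of l
  have hU : (U : Filter ι) ≤ l := Ultrafilter.of_le l
  have hlim : ∀ x, ∃ w, Tendsto (fun i => f i x) U (𝓝 w) := by
    intro x
    have hball : ∀ᶠ i in l, f i x ∈ closedBall z (dist x x₀ + r) := by
      filter_upwards [h₀, hf x x₀] with i hi hix
      rw [mem_closedBall]
      linarith [dist_triangle (f i x) (f i x₀) z]
    obtain ⟨w, -, hw⟩ := (isCompact_closedBall z (dist x x₀ + r)).ultrafilter_le_nhds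
      (U.map fun i => f i x) (le_principal_iff.2 (hU hball))
    exact ⟨w, hw⟩
  choose g hg using hlim
  refine ⟨g, Isometry.of_dist_eq fun x y => tendsto_nhds_unique ((hg x).dist (hg y)) ?_⟩
  exact tendsto_const_nhds.congr' (((hf x y).filter_mono hU).mono fun i hi => hi.symm)

theorem stmt_9_general (k : ℕ) {Z : Type*} [MetricSpace Z] [ProperSpace Z]
    (hnoline : ¬ ∃ ℓ : ℝ → Z, Isometry ℓ)
    {Γ : Type*} [Group Γ] [MulAction Γ (WithLp 2 (EuclideanSpace ℝ (Fin k) × Z))]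
    (a : Γ → (EuclideanSpace ℝ (Fin k) ≃ᵢ EuclideanSpace ℝ (Fin k)))
    (b : Γ → (Z ≃ᵢ Z))
    (hsplit : ∀ (γ : Γ) (v : EuclideanSpace ℝ (Fin k)) (w : Z),
      γ • (WithLp.equiv 2 (EuclideanSpace ℝ (Fin k) × Z)).symm (v, w) =
        (WithLp.equiv 2 (EuclideanSpace ℝ (Fin k) × Z)).symm (a γ v, b γ w))
    (z : Z) (x : WithLp 2 (EuclideanSpace ℝ (Fin k) × Z))
    (hx : x = (WithLp.equiv 2 (EuclideanSpace ℝ (Fin k) × Z)).symm (0, z))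
    (R : ℝ)
    (hmin : ∀ γ : Γ, ∃ c : ℝ → WithLp 2 (EuclideanSpace ℝ (Fin k) × Z),
      IsMinGeodesic c x (γ • x) ∧
      ∀ t ∈ Set.Icc (0 : ℝ) (dist x (γ • x)),
        Metric.infDist (c t) (MulAction.orbit Γ x) ≤ R) :
    Bornology.IsBounded (Set.range fun γ : Γ => b γ z) := by
  have hsnd : ∀ γ : Γ, (γ • x).snd = b γ z := fun γ => by rw [hx, hsplit]; rfl
  have hxz : x.snd = z := by rw [hx]; rfl
  by_contra hunb
  have hfar : ∀ n : ℕ, ∃ γ : Γ, (n : ℝ) < dist x.snd (γ • x).snd := by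
    intro n
    by_contra! hnear
    refine hunb ((isBounded_iff_subset_closedBall z).2 ⟨n, ?_⟩)
    rintro _ ⟨γ, rfl⟩
    simpa [mem_closedBall, dist_comm, hxz, hsnd] using hnear γ
  choose γ hγ using hfar
  choose c hc hnear using fun n => hmin (γ n)
  have hmid : ∀ n, ∃ β : Γ, dist (c n (dist x (γ n • x) / 2)) (β • x) < R + 1 := by
    intro n
    have hpos : 0 ≤ dist x (γ n • x) := dist_nonneg
    obtain ⟨_, ⟨β, rfl⟩, hβ⟩ := (infDist_lt_iff ⟨x, MulAction.mem_orbit_self x⟩).1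
      ((hnear n (dist x (γ n • x) / 2) ⟨by linarith, by linarith⟩).trans_lt (lt_add_one R))
    exact ⟨β, hβ⟩
  choose β hβ using hmid
  refine hnoline (exists_isometry_of_eventually_dist_eq_s9 (l := atTop)
    (fun n s => (b (β n)).symm (c n (dist x (γ n • x) / 2 +
      dist x (γ n • x) / dist x.snd (γ n • x).snd * s)).snd) 0 z (R + 1) ?_ ?_)
  · refine Eventually.of_forall fun n => ?_
    rw [mul_zero, add_zero, ← (b (β n)).dist_eq, IsometryEquiv.apply_symm_apply, ← hsnd]
    exact (WithLp.dist_snd_le _ _).trans (hβ n).le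
  · intro s t
    filter_upwards [eventually_ge_atTop ⌈2 * (|s| + |t|)⌉₊] with n hn
    have hn' : 2 * (|s| + |t|) < dist x.snd (γ n • x).snd :=
      (Nat.ceil_le.1 hn).trans_lt (hγ n)
    rw [(b (β n)).symm.dist_eq, Real.dist_eq]
    exact (hc n).dist_snd_rescale (by linarith [abs_nonneg s, abs_nonneg t])
      (by linarith [abs_nonneg t]) (by linarith [abs_nonneg s])

/-- Let `Z` be a proper metric space containing no line, and let `Γ` act by isometries on the
ℓ²-product `X = ℝᵏ × Z` preserving the splitting, `γ · (v, w) = (γ₁ v, γ₂ w)`. If, with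
`x̃ = (0, z)`, every minimal geodesic from `x̃` to `γ · x̃` (for a suitable choice) stays within
distance `R` of the orbit `Γ · x̃`, then `{γ₂ · z : γ ∈ Γ}` is bounded in `Z`. -/
theorem stmt_9 (k : ℕ) {Z : Type*} [MetricSpace Z] [ProperSpace Z]
    (hnoline : ¬ ∃ ℓ : ℝ → Z, Isometry ℓ)
    {Γ : Type*} [Group Γ] [MulAction Γ (WithLp 2 (EuclideanSpace ℝ (Fin k) × Z))]
    (hiso : ∀ γ : Γ, Isometry (fun p : WithLp 2 (EuclideanSpace ℝ (Fin k) × Z) => γ • p))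
    (a : Γ → (EuclideanSpace ℝ (Fin k) ≃ᵢ EuclideanSpace ℝ (Fin k)))
    (b : Γ → (Z ≃ᵢ Z))
    (hsplit : ∀ (γ : Γ) (v : EuclideanSpace ℝ (Fin k)) (w : Z),
      γ • (WithLp.equiv 2 (EuclideanSpace ℝ (Fin k) × Z)).symm (v, w) =
        (WithLp.equiv 2 (EuclideanSpace ℝ (Fin k) × Z)).symm (a γ v, b γ w))
    (z : Z) (x : WithLp 2 (EuclideanSpace ℝ (Fin k) × Z))
    (hx : x = (WithLp.equiv 2 (EuclideanSpace ℝ (Fin k) × Z)).symm (0, z))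
    (R : ℝ) (hR : 0 < R)
    (hmin : ∀ γ : Γ, ∃ c : ℝ → WithLp 2 (EuclideanSpace ℝ (Fin k) × Z),
      IsMinGeodesic c x (γ • x) ∧
      ∀ t ∈ Set.Icc (0 : ℝ) (dist x (γ • x)),
        Metric.infDist (c t) (MulAction.orbit Γ x) ≤ R) :
    Bornology.IsBounded (Set.range fun γ : Γ => b γ z) :=
  stmt_9_general k hnoline a b hsplit z x hx R hmin
end
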